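/- arXiv:2009.06562 — 6 statements merged into one kernel-verified Lean document; each statement's English description precedes it below -/
import Mathlib

section
/- Let f : ℝ^d → ℝ be differentiable and L̃-smooth with L̃ > 0, let r : ℝ^d → ℝ, and set F = f + r. Let 0 < η < 1/(2L̃), let x, g ∈ ℝ^d, and suppose x₊ minimizes y ↦ r(y) + ⟨g, y − x⟩ + (1/(2η))‖y − x‖² over ℝ^d. Then ‖x₊ − x‖² ≤ (2η/(1 − 2L̃η))·(F(x) − F(x₊)) + (η/(L̃ − 2L̃²η))·‖g − ∇f(x)‖². -/
/-!
Testing the minimality of `x₊` against `y = x` bounds `r x₊ - r x` by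
`-⟪g, x₊ - x⟫ - ‖x₊ - x‖² / (2η)`, and the descent lemma bounds `f x₊ - f x` by
`⟪∇f x, x₊ - x⟫ + (L̃/2) ‖x₊ - x‖²`. Adding the two, Young's inequality with weight `L̃` absorbs the
cross term `⟪∇f x - g, x₊ - x⟫`, leaving
`(1/(2η) - L̃) ‖x₊ - x‖² ≤ F x - F x₊ + ‖g - ∇f x‖² / (2L̃)`,
whose coefficient is positive because `η < 1/(2L̃)`.
-/

open InnerProductSpace
open scoped Gradient

section Descent

variable {E : Type*} [NormedAddCommGroup E] [InnerProductSpace ℝ E] [CompleteSpace E]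

theorem Differentiable.hasDerivAt_comp_add_smul {f : E → ℝ} (hf : Differentiable ℝ f)
    (x v : E) (t : ℝ) :
    HasDerivAt (fun s : ℝ => f (x + s • v)) ⟪∇ f (x + t • v), v⟫_ℝ t := by
  have hline : HasDerivAt (fun s : ℝ => x + s • v) v t := by
    simpa using ((hasDerivAt_id t).smul_const v).const_add x
  rw [inner_gradient_left]
  exact (hf _).hasFDerivAt.comp_hasDerivAt t hline

theorem Differentiable.image_le_add_inner_gradient_add_sq {f : E → ℝ} (hf : Differentiable ℝ f)
    {L : ℝ} (hsmooth : ∀ x₁ x₂ : E, ‖∇ f x₁ - ∇ f x₂‖ ≤ L * ‖x₁ - x₂‖) (x y : E) :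
    f y ≤ f x + ⟪∇ f x, y - x⟫_ℝ + L / 2 * ‖y - x‖ ^ 2 := by
  set v := y - x
  let φ : ℝ → ℝ := fun t => f (x + t • v) - t * ⟪∇ f x, v⟫_ℝ - L / 2 * t ^ 2 * ‖v‖ ^ 2
  have hφ : ∀ t, HasDerivAt φ (⟪∇ f (x + t • v), v⟫_ℝ - ⟪∇ f x, v⟫_ℝ - L * t * ‖v‖ ^ 2) t := by
    intro t
    have h := ((hf.hasDerivAt_comp_add_smul x v t).sub
      ((hasDerivAt_id' t).mul_const ⟪∇ f x, v⟫_ℝ)).sub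
      (((hasDerivAt_pow 2 t).const_mul (L / 2)).mul_const (‖v‖ ^ 2))
    refine h.congr_deriv ?_
    rw [show ((2 : ℕ) : ℝ) * t ^ (2 - 1) = 2 * t by norm_num]
    ring
  have hφ' : ∀ t ∈ Set.Icc (0 : ℝ) 1,
      ⟪∇ f (x + t • v), v⟫_ℝ - ⟪∇ f x, v⟫_ℝ - L * t * ‖v‖ ^ 2 ≤ 0 := by
    rintro t ⟨ht, -⟩
    have hgrad : ‖∇ f (x + t • v) - ∇ f x‖ ≤ L * (t * ‖v‖) := by
      simpa [norm_smul, abs_of_nonneg ht] using hsmooth (x + t • v) x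
    rw [sub_nonpos]
    calc ⟪∇ f (x + t • v), v⟫_ℝ - ⟪∇ f x, v⟫_ℝ = ⟪∇ f (x + t • v) - ∇ f x, v⟫_ℝ :=
          (inner_sub_left _ _ _).symm
      _ ≤ ‖∇ f (x + t • v) - ∇ f x‖ * ‖v‖ := real_inner_le_norm _ _
      _ ≤ L * (t * ‖v‖) * ‖v‖ := by gcongr
      _ = L * t * ‖v‖ ^ 2 := by ring
  have hanti : AntitoneOn φ (Set.Icc 0 1) :=
    antitoneOn_of_hasDerivWithinAt_nonpos (convex_Icc 0 1)
      (fun t _ => (hφ t).continuousAt.continuousWithinAt)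
      (fun t _ => (hφ t).hasDerivWithinAt)
      (fun t ht => hφ' t (interior_subset ht))
  have h10 : φ 1 ≤ φ 0 := hanti (by simp) (by simp) zero_le_one
  simp only [φ, one_smul, zero_smul, add_zero, one_pow, one_mul, zero_mul, sub_zero,
    ne_eq, OfNat.ofNat_ne_zero, not_false_eq_true, zero_pow, mul_zero] at h10
  rw [show x + v = y by simp [v]] at h10
  linarith

end Descent

theorem real_inner_le_sq_div_add_mul_sq {F : Type*} [NormedAddCommGroup F] [InnerProductSpace ℝ F]
    {L : ℝ} (hL : 0 < L) (a b : F) : ⟪a, b⟫_ℝ ≤ ‖a‖ ^ 2 / (2 * L) + L / 2 * ‖b‖ ^ 2 := by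
  have hamgm : 2 * ‖a‖ * (L * ‖b‖) ≤ ‖a‖ ^ 2 + (L * ‖b‖) ^ 2 := two_mul_le_add_sq _ _
  calc ⟪a, b⟫_ℝ ≤ ‖a‖ * ‖b‖ := real_inner_le_norm a b
    _ ≤ ‖a‖ ^ 2 / (2 * L) + L / 2 * ‖b‖ ^ 2 := by
      rw [div_add' _ _ _ (by positivity), le_div_iff₀ (by positivity)]
      nlinarith

/-- Lemma 4.1, distance bound. Let `f` be differentiable and `L̃`-smooth
(`L̃ > 0`), `F = f + r`, `0 < η < 1/(2L̃)`, and let `x₊ = prox_{ηr}(x − ηg)`, i.e. `x₊`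
minimizes `y ↦ r y + ⟪g, y − x⟫ + (1/(2η))‖y − x‖²`. Then
`‖x₊ − x‖² ≤ (2η/(1 − 2L̃η))(F(x) − F(x₊)) + (η/(L̃ − 2L̃²η))‖g − ∇f(x)‖²`. -/
theorem prox_update_distance_bound {d : ℕ}
    (f : EuclideanSpace ℝ (Fin d) → ℝ) (hf : Differentiable ℝ f)
    (Lt : ℝ) (hLt : 0 < Lt)
    (hsmooth : ∀ x₁ x₂ : EuclideanSpace ℝ (Fin d),
      ‖gradient f x₁ - gradient f x₂‖ ≤ Lt * ‖x₁ - x₂‖)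
    (r : EuclideanSpace ℝ (Fin d) → ℝ)
    (F : EuclideanSpace ℝ (Fin d) → ℝ) (hF : F = fun x => f x + r x)
    (η : ℝ) (hη0 : 0 < η) (hη1 : η < 1 / (2 * Lt))
    (x g xplus : EuclideanSpace ℝ (Fin d))
    (hmin : ∀ y : EuclideanSpace ℝ (Fin d),
      r xplus + (inner ℝ g (xplus - x) : ℝ) + (1 / (2 * η)) * ‖xplus - x‖ ^ 2
        ≤ r y + (inner ℝ g (y - x) : ℝ) + (1 / (2 * η)) * ‖y - x‖ ^ 2) :
    ‖xplus - x‖ ^ 2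
      ≤ (2 * η / (1 - 2 * Lt * η)) * (F x - F xplus)
        + (η / (Lt - 2 * Lt ^ 2 * η)) * ‖g - gradient f x‖ ^ 2 := by
  have hopt : r xplus + ⟪g, xplus - x⟫_ℝ + 1 / (2 * η) * ‖xplus - x‖ ^ 2 ≤ r x := by
    simpa using hmin x
  have hdesc := hf.image_le_add_inner_gradient_add_sq hsmooth x xplus
  have hyoung := real_inner_le_sq_div_add_mul_sq hLt (∇ f x - g) (xplus - x)
  rw [inner_sub_left, norm_sub_rev] at hyoung
  have hgap : 0 < 1 - 2 * Lt * η := by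
    rw [lt_div_iff₀ (by positivity)] at hη1
    linarith
  have hdecrease : (1 / (2 * η) - Lt) * ‖xplus - x‖ ^ 2
      ≤ F x - F xplus + ‖g - ∇ f x‖ ^ 2 / (2 * Lt) := by
    rw [hF]
    linarith
  calc ‖xplus - x‖ ^ 2 = 2 * η / (1 - 2 * Lt * η) * ((1 / (2 * η) - Lt) * ‖xplus - x‖ ^ 2) := by
        field_simp
        rw [mul_div_cancel_right₀ _ (by linarith)]
    _ ≤ 2 * η / (1 - 2 * Lt * η) * (F x - F xplus + ‖g - ∇ f x‖ ^ 2 / (2 * Lt)) := by gcongr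
    _ = _ := by
        rw [show Lt - 2 * Lt ^ 2 * η = Lt * (1 - 2 * Lt * η) by ring]
        field_simp
end

section
/- (Convergence of ProxSGD-AS) Let F = f + r where f = (1/n)∑_{i=1}^n f_i, each f_i : ℝ^d → ℝ differentiable with L_i-Lipschitz gradient, L̃ = (1/n)∑_{i=1}^n L_i > 0, r : ℝ^d → ℝ, and suppose F attains a finite infimum F(x*). On a probability space with a filtration (F_t), let x_1 ∈ ℝ^d be deterministic and for t = 1,…,T let g_t be a square-integrable random vector with x_t F_t-measurable and E[g_t | F_t] = ∇f(x_t) almost surely, and let x_{t+1} minimize y ↦ r(y) + ⟨g_t, y − x_t⟩ + (1/(2η))‖y − x_t‖² over ℝ^d. If 0 < η < 1/(2L̃), then (1/T)∑_{t=1}^T E[dist(0, ∂̂F(x_{t+1}))²] ≤ (C₁/T)∑_{t=1}^T E[‖∇f(x_t) − g_t‖²] + (C₂/T)·(F(x_1) − F(x*)), where C₁ = (1 + 4L̃η − 2L̃²η²)/(L̃η − 2L̃²η²) and C₂ = (2 + 4L̃η + 4L̃²η²)/(η − 2L̃η²). -/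
open MeasureTheory Filter Finset

/-- The Fréchet subdifferential of `F` at `x`. -/
noncomputable def frechetSubdiff {E : Type*} [NormedAddCommGroup E] [InnerProductSpace ℝ E]
    (F : E → ℝ) (x : E) : Set E :=
  {v | 0 ≤ liminf (fun y => (F y - F x - (inner ℝ v (y - x) : ℝ)) / ‖y - x‖)
        (nhdsWithin x {x}ᶜ)}

/-!
The argument is pathwise. Optimality of the proximal step gives the explicit Fréchet subgradient
`vₜ = ∇f(xₜ₊₁) - gₜ - (xₜ₊₁ - xₜ)/η` of `F` at `xₜ₊₁`. The descent lemma for the `L̃`-smooth `f`,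
compared with the proximal objective at `y = xₜ`, yields a decrease of `F` up to the gradient error
`eₜ = ∇f(xₜ) - gₜ`; together with `‖∇f(xₜ₊₁) - ∇f(xₜ)‖ ≤ L̃ ‖xₜ₊₁ - xₜ‖` this bounds `‖vₜ‖²` by a
multiple of `‖eₜ‖²` plus a multiple of `F(xₜ) - F(xₜ₊₁)`, which telescopes to at most
`F(x₁) - F(x*)`. Taking expectations needs `‖eₜ‖²` integrable, which holds inductively since each
increment `‖xₜ₊₁ - xₜ‖²` is controlled by the earlier errors.
-/

open Topology
open scoped RealInnerProductSpace

theorem sum_Icc_one_sub_succ {M : Type*} [AddCommGroup M] (φ : ℕ → M) (k : ℕ) :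
    ∑ s ∈ Icc 1 k, (φ s - φ (s + 1)) = φ 1 - φ (k + 1) := by
  induction k with
  | zero => simp
  | succ k ih =>
    rw [sum_Icc_succ_top (by omega), ih]
    abel

theorem Real.liminf_nonneg_of_le_of_tendsto_zero {α : Type*} {l : Filter α} {u m : α → ℝ}
    (hmu : ∀ᶠ y in l, m y ≤ u y) (hm : Tendsto m l (𝓝 0)) : 0 ≤ liminf u l := by
  rw [liminf_eq]
  have hmem : ∀ ε > 0, -ε ∈ {a : ℝ | ∀ᶠ y in l, a ≤ u y} := fun ε hε => by
    filter_upwards [hm.eventually (eventually_ge_nhds (neg_lt_zero.mpr hε)), hmu] with y h1 h2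
    exact h1.trans h2
  by_cases hb : BddAbove {a : ℝ | ∀ᶠ y in l, a ≤ u y}
  · exact le_of_forall_sub_le fun ε hε => by simpa using le_csSup hb (hmem ε hε)
  · rw [Real.sSup_of_not_bddAbove hb]

section Measure

variable {Ω : Type*} [MeasurableSpace Ω] {μ : Measure Ω}

theorem sum_integral_le_integral_of_sum_le {ι : Type*} (s : Finset ι) {u : ι → Ω → ℝ}
    {G : Ω → ℝ} (hu : ∀ i ∈ s, ∀ ω, 0 ≤ u i ω) (hG : Integrable G μ)
    (hle : ∀ ω, ∑ i ∈ s, u i ω ≤ G ω) :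
    ∑ i ∈ s, ∫ ω, u i ω ∂μ ≤ ∫ ω, G ω ∂μ := by
  classical
  -- non-integrable summands have integral `0`, so only the integrable ones matter
  set s' := s.filter fun i => Integrable (u i) μ
  have hs' : s' ⊆ s := filter_subset _ _
  have hint : ∀ i ∈ s', Integrable (u i) μ := fun i hi => (mem_filter.mp hi).2
  calc ∑ i ∈ s, ∫ ω, u i ω ∂μ = ∑ i ∈ s', ∫ ω, u i ω ∂μ :=
        (sum_subset hs' fun i hi hi' => integral_undef fun h => hi' (mem_filter.mpr ⟨hi, h⟩)).symm
    _ = ∫ ω, ∑ i ∈ s', u i ω ∂μ := (integral_finsetSum s' hint).symm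
    _ ≤ ∫ ω, G ω ∂μ := integral_mono (integrable_finsetSum s' hint) hG fun ω =>
        (sum_le_sum_of_subset_of_nonneg hs' fun i hi _ => hu i hi ω).trans (hle ω)

theorem memLp_two_of_norm_sq_le {V : Type*} [NormedAddCommGroup V] {Y : Ω → V} {h : Ω → ℝ}
    (hY : AEStronglyMeasurable Y μ) (hh : Integrable h μ) (hle : ∀ ω, ‖Y ω‖ ^ 2 ≤ h ω) :
    MemLp Y 2 μ :=
  (memLp_two_iff_integrable_sq_norm hY).mpr <| hh.mono' (hY.norm.pow 2) <|
    Eventually.of_forall fun ω => by rw [Real.norm_of_nonneg (by positivity)]; exact hle ω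

end Measure

section InnerProductSpace

variable {E : Type*} [NormedAddCommGroup E] [InnerProductSpace ℝ E]

theorem mem_frechetSubdiff_of_tendsto {F : E → ℝ} {x v : E} {ρ : E → ℝ}
    (hρ : Tendsto ρ (𝓝 x) (𝓝 0)) (hF : ∀ y ≠ x, -(ρ y * ‖y - x‖) ≤ F y - F x - ⟪v, y - x⟫) :
    v ∈ frechetSubdiff F x := by
  refine Real.liminf_nonneg_of_le_of_tendsto_zero (m := fun y => -ρ y) ?_
    (by simpa using hρ.neg.mono_left nhdsWithin_le_nhds)
  filter_upwards [self_mem_nhdsWithin] with y (hy : y ≠ x)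
  rw [le_div_iff₀ (norm_pos_iff.mpr (sub_ne_zero.mpr hy)), neg_mul]
  exact hF y hy

def IsProxGradStep (r : E → ℝ) (η : ℝ) (x g x' : E) : Prop :=
  ∀ y, r x' + ⟪g, x' - x⟫ + 1 / (2 * η) * ‖x' - x‖ ^ 2
    ≤ r y + ⟪g, y - x⟫ + 1 / (2 * η) * ‖y - x‖ ^ 2

namespace IsProxGradStep

variable {r : E → ℝ} {η : ℝ} {x g x' : E}

theorem quadratic_lower_bound (h : IsProxGradStep r η x g x') (y : E) :
    -(1 / (2 * η) * ‖y - x'‖ ^ 2) ≤ r y - r x' - ⟪-(g + η⁻¹ • (x' - x)), y - x'⟫ := by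
  have hy := h y
  have hsplit : y - x = (y - x') + (x' - x) := by abel
  rw [hsplit, norm_add_sq_real, inner_add_right] at hy
  have hη : 1 / (2 * η) * (2 * ⟪y - x', x' - x⟫) = η⁻¹ * ⟪x' - x, y - x'⟫ := by
    rw [real_inner_comm]; field_simp
  rw [inner_neg_left, inner_add_left, real_inner_smul_left]
  nlinarith

end IsProxGradStep

variable [CompleteSpace E]

theorem add_mem_frechetSubdiff_of_hasGradientAt {f r : E → ℝ} {x w f' : E} {c : ℝ}
    (hf : HasGradientAt f f' x) (hr : ∀ y, -(c * ‖y - x‖ ^ 2) ≤ r y - r x - ⟪w, y - x⟫) :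
    f' + w ∈ frechetSubdiff (f + r) x := by
  refine mem_frechetSubdiff_of_tendsto
    (ρ := fun y => ‖y - x‖⁻¹ * ‖f y - f x - ⟪f', y - x⟫‖ + c * ‖y - x‖) ?_ fun y hy => ?_
  · have hdist : Tendsto (fun y => c * ‖y - x‖) (𝓝 x) (𝓝 0) := by
      simpa using (tendsto_norm_sub_self x).const_mul c
    simpa using (hasGradientAt_iff_tendsto.mp hf).add hdist
  · have hy' : ‖y - x‖ ≠ 0 := norm_ne_zero_iff.mpr (sub_ne_zero.mpr hy)
    have hρ : (‖y - x‖⁻¹ * ‖f y - f x - ⟪f', y - x⟫‖ + c * ‖y - x‖) * ‖y - x‖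
        = |f y - f x - ⟪f', y - x⟫| + c * ‖y - x‖ ^ 2 := by
      rw [Real.norm_eq_abs]; field_simp
    rw [hρ, Pi.add_apply, Pi.add_apply, inner_add_left]
    linarith [neg_abs_le (f y - f x - ⟪f', y - x⟫), hr y]

theorem hasGradientAt_const_mul_sum {ι : Type*} (s : Finset ι) {f : ι → E → ℝ} (c : ℝ) {p : E}
    (hf : ∀ i ∈ s, DifferentiableAt ℝ (f i) p) :
    HasGradientAt (fun x => c * ∑ i ∈ s, f i x) (c • ∑ i ∈ s, gradient (f i) p) p := by
  have hsum := (HasFDerivAt.fun_sum fun i hi => (hf i hi).hasFDerivAt).const_mul c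
  convert hsum.hasGradientAt
  simp [gradient, map_sum]

structure HasLipschitzGradient (f : E → ℝ) (L : ℝ) : Prop where
  differentiable : Differentiable ℝ f
  norm_gradient_sub_le : ∀ p q, ‖gradient f p - gradient f q‖ ≤ L * ‖p - q‖

namespace HasLipschitzGradient

variable {f : E → ℝ} {L : ℝ}

theorem continuous_gradient (hf : HasLipschitzGradient f L) : Continuous (gradient f) :=
  (LipschitzWith.of_dist_le' (K := L) fun p q => by
    simpa only [dist_eq_norm] using hf.norm_gradient_sub_le p q).continuous

theorem descent_lemma (hf : HasLipschitzGradient f L) (x y : E) :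
    f y ≤ f x + ⟪gradient f x, y - x⟫ + L / 2 * ‖y - x‖ ^ 2 := by
  set v := y - x
  -- by the Lipschitz bound, `φ' s = ⟪∇f (x + s • v) - ∇f x, v⟫ - s L ‖v‖² ≤ 0` on `[0, 1]`
  set φ : ℝ → ℝ := fun s => f (x + s • v) - s * ⟪gradient f x, v⟫ - s ^ 2 * (L / 2 * ‖v‖ ^ 2)
  have hφ : ∀ s : ℝ, HasDerivAt φ
      (⟪gradient f (x + s • v), v⟫ - ⟪gradient f x, v⟫ - 2 * s * (L / 2 * ‖v‖ ^ 2)) s := by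
    intro s
    have hline : HasDerivAt (fun s : ℝ => x + s • v) v s := by
      simpa using ((hasDerivAt_id s).smul_const v).const_add x
    have hcomp : HasDerivAt (fun s : ℝ => f (x + s • v)) ⟪gradient f (x + s • v), v⟫ s := by
      simpa [InnerProductSpace.toDual_apply_apply, Function.comp_def] using
        (hf.differentiable (x + s • v)).hasGradientAt.hasFDerivAt.comp_hasDerivAt s hline
    simpa [φ, Pi.sub_def] using (hcomp.sub (hasDerivAt_mul_const ⟪gradient f x, v⟫)).sub
      ((hasDerivAt_pow 2 s).mul_const (L / 2 * ‖v‖ ^ 2))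
  have hanti : AntitoneOn φ (Set.Icc 0 1) := by
    refine antitoneOn_of_deriv_nonpos (convex_Icc 0 1)
      (fun s _ => (hφ s).continuousAt.continuousWithinAt)
      (fun s _ => (hφ s).differentiableAt.differentiableWithinAt) fun s hs => ?_
    rw [interior_Icc] at hs
    have hlip : ‖gradient f (x + s • v) - gradient f x‖ ≤ L * (s * ‖v‖) := by
      simpa [norm_smul, abs_of_pos hs.1] using hf.norm_gradient_sub_le (x + s • v) x
    have hcs := real_inner_le_norm (gradient f (x + s • v) - gradient f x) v
    rw [inner_sub_left] at hcs
    rw [(hφ s).deriv]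
    nlinarith [mul_le_mul_of_nonneg_right hlip (norm_nonneg v)]
  have h01 := hanti (by simp) (by simp) zero_le_one
  simp only [φ, v, zero_smul, add_zero, one_smul, add_sub_cancel] at h01
  linarith

theorem const_mul_sum {ι : Type*} (s : Finset ι) {f : ι → E → ℝ}
    {L : ι → ℝ} {c : ℝ} (hc : 0 ≤ c) (hf : ∀ i ∈ s, HasLipschitzGradient (f i) (L i)) :
    HasLipschitzGradient (fun x => c * ∑ i ∈ s, f i x) (c * ∑ i ∈ s, L i) := by
  have hgrad : ∀ p, gradient (fun x => c * ∑ i ∈ s, f i x) p = c • ∑ i ∈ s, gradient (f i) p :=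
    fun p => (hasGradientAt_const_mul_sum s c fun i hi => (hf i hi).differentiable p).gradient
  refine ⟨fun p => (hasGradientAt_const_mul_sum s c fun i hi =>
    (hf i hi).differentiable p).differentiableAt, fun p q => ?_⟩
  rw [hgrad, hgrad, ← smul_sub, ← sum_sub_distrib, norm_smul, Real.norm_of_nonneg hc, mul_assoc,
    sum_mul]
  gcongr
  exact (norm_sum_le _ _).trans (sum_le_sum fun i hi => (hf i hi).norm_gradient_sub_le p q)

theorem memLp_gradient_comp {Ω : Type*} [MeasurableSpace Ω] {μ : Measure Ω} [IsFiniteMeasure μ]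
    {p : ENNReal} {X : Ω → E} (hf : HasLipschitzGradient f L) (hX : MemLp X p μ) :
    MemLp (fun ω => gradient f (X ω)) p μ := by
  have hmeas := hf.continuous_gradient.comp_aestronglyMeasurable hX.aestronglyMeasurable
  have hsub : MemLp (fun ω => gradient f (X ω) - gradient f 0) p μ :=
    hX.of_le_mul (hmeas.sub aestronglyMeasurable_const) <| Eventually.of_forall fun ω => by
      simpa using hf.norm_gradient_sub_le (X ω) 0
  simpa only [Pi.add_def, sub_add_cancel] using hsub.add (memLp_const (gradient f 0))

end HasLipschitzGradient

namespace IsProxGradStep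

variable {f r : E → ℝ} {L η : ℝ} {x g x' : E}

theorem mem_frechetSubdiff (h : IsProxGradStep r η x g x') (hf : DifferentiableAt ℝ f x') :
    gradient f x' - g - η⁻¹ • (x' - x) ∈ frechetSubdiff (f + r) x' := by
  have hmem := add_mem_frechetSubdiff_of_hasGradientAt hf.hasGradientAt h.quadratic_lower_bound
  rwa [sub_sub, sub_eq_add_neg]

theorem sufficient_decrease (h : IsProxGradStep r η x g x') (hf : HasLipschitzGradient f L)
    (hη : 0 < η) :
    2 * η * (f x' + r x') ≤ 2 * η * (f x + r x) + 2 * η * ⟪gradient f x - g, x' - x⟫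
      - (1 - L * η) * ‖x' - x‖ ^ 2 := by
  have hx := h x
  simp only [sub_self, inner_zero_right, norm_zero] at hx
  field_simp at hx
  rw [inner_sub_left]
  nlinarith [mul_le_mul_of_nonneg_left (hf.descent_lemma x x') (by positivity : 0 ≤ 2 * η)]

theorem norm_sub_sq_le (h : IsProxGradStep r η x g x') (hf : HasLipschitzGradient f L)
    (hL : 0 ≤ L) (hη : 0 < η) :
    L * (1 - 2 * L * η) * ‖x' - x‖ ^ 2
      ≤ 2 * η * L * (f x + r x - (f x' + r x')) + η * ‖gradient f x - g‖ ^ 2 := by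
  have hyoung : 2 * L * ⟪gradient f x - g, x' - x⟫
      ≤ ‖gradient f x - g‖ ^ 2 + L ^ 2 * ‖x' - x‖ ^ 2 := by
    nlinarith [real_inner_le_norm (gradient f x - g) (x' - x),
      sq_nonneg (‖gradient f x - g‖ - L * ‖x' - x‖), norm_nonneg (gradient f x - g),
      norm_nonneg (x' - x)]
  nlinarith [mul_le_mul_of_nonneg_left (h.sufficient_decrease hf hη) hL,
    mul_le_mul_of_nonneg_left hyoung hη.le]

theorem sq_mul_norm_sq_le_add_norm_sub_sq (h : IsProxGradStep r η x g x')
    (hf : HasLipschitzGradient f L) (hη : 0 < η) :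
    η ^ 2 * ‖gradient f x' - g - η⁻¹ • (x' - x)‖ ^ 2
      ≤ 2 * η ^ 2 * ‖gradient f x - g‖ ^ 2 + (2 * L ^ 2 * η ^ 2 + 3 * L * η) * ‖x' - x‖ ^ 2
        + 2 * η * (f x + r x - (f x' + r x')) := by
  set u := gradient f x' - gradient f x
  set e := gradient f x - g
  set Δ := x' - x
  have hu : ‖u‖ ≤ L * ‖Δ‖ := hf.norm_gradient_sub_le x' x
  have hscale : η • (gradient f x' - g - η⁻¹ • Δ) = η • (u + e) - Δ := by
    rw [smul_sub, smul_inv_smul₀ hη.ne']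
    simp only [u, e]
    abel_nf
  have hexpand : η ^ 2 * ‖gradient f x' - g - η⁻¹ • Δ‖ ^ 2
      = η ^ 2 * ‖u + e‖ ^ 2 - 2 * η * ⟪u, Δ⟫ - 2 * η * ⟪e, Δ⟫ + ‖Δ‖ ^ 2 := by
    have hsq : ∀ w : E, η ^ 2 * ‖w‖ ^ 2 = ‖η • w‖ ^ 2 := fun w => by
      rw [norm_smul, Real.norm_of_nonneg hη.le, mul_pow]
    rw [hsq, hscale, norm_sub_sq_real, ← hsq, real_inner_smul_left, inner_add_left]
    ring
  have hue : ‖u + e‖ ^ 2 ≤ 2 * ‖u‖ ^ 2 + 2 * ‖e‖ ^ 2 := by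
    nlinarith [parallelogram_law_with_norm ℝ u e, norm_nonneg (u - e)]
  have huΔ : -⟪u, Δ⟫ ≤ L * ‖Δ‖ ^ 2 := by
    nlinarith [neg_le_abs ⟪u, Δ⟫, abs_real_inner_le_norm u Δ,
      mul_le_mul_of_nonneg_right hu (norm_nonneg Δ)]
  have hu2 : ‖u‖ ^ 2 ≤ L ^ 2 * ‖Δ‖ ^ 2 := by
    rw [← mul_pow]; exact pow_le_pow_left₀ (norm_nonneg u) hu 2
  nlinarith [h.sufficient_decrease hf hη]

theorem sq_mul_norm_sq_le (h : IsProxGradStep r η x g x') (hf : HasLipschitzGradient f L)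
    (hL : 0 ≤ L) (hη : 0 < η) (hLη : 2 * L * η ≤ 1) :
    η ^ 2 * (1 - 2 * L * η) * ‖gradient f x' - g - η⁻¹ • (x' - x)‖ ^ 2
      ≤ η ^ 2 * (5 - 2 * L * η) * ‖gradient f x - g‖ ^ 2
        + 2 * η * (1 + L * η + 2 * L ^ 2 * η ^ 2) * (f x + r x - (f x' + r x')) := by
  -- the `‖x' - x‖²` term of `sq_mul_norm_sq_le_add_norm_sub_sq` is absorbed by `norm_sub_sq_le`
  nlinarith [mul_le_mul_of_nonneg_left (h.sq_mul_norm_sq_le_add_norm_sub_sq hf hη)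
      (sub_nonneg.mpr hLη),
    mul_le_mul_of_nonneg_left (h.norm_sub_sq_le hf hL hη) (by positivity : 0 ≤ η * (2 * L * η + 3))]

end IsProxGradStep

section Trajectory

variable {f r : E → ℝ} {L η m : ℝ} {x g : ℕ → E} {T : ℕ}

theorem sum_infDist_frechetSubdiff_sq_le (hf : HasLipschitzGradient f L) (hL : 0 < L)
    (hη : 0 < η) (hLη : 2 * L * η < 1)
    (hstep : ∀ t ∈ Icc 1 T, IsProxGradStep r η (x t) (g t) (x (t + 1)))
    (hlow : ∀ y, m ≤ f y + r y) :
    ∑ t ∈ Icc 1 T, Metric.infDist 0 (frechetSubdiff (f + r) (x (t + 1))) ^ 2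
      ≤ (1 + 4 * L * η - 2 * L ^ 2 * η ^ 2) / (L * η - 2 * L ^ 2 * η ^ 2)
          * ∑ t ∈ Icc 1 T, ‖gradient f (x t) - g t‖ ^ 2
        + (2 + 4 * L * η + 4 * L ^ 2 * η ^ 2) / (η - 2 * L * η ^ 2) * (f (x 1) + r (x 1) - m) := by
  set a := η ^ 2 * (1 - 2 * L * η)
  set b := η ^ 2 * (5 - 2 * L * η)
  set c := 2 * η * (1 + L * η + 2 * L ^ 2 * η ^ 2)
  have h1 : 0 < 1 - 2 * L * η := by linarith
  have ha : 0 < a := by positivity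
  have hdist : ∀ t ∈ Icc 1 T, a * Metric.infDist 0 (frechetSubdiff (f + r) (x (t + 1))) ^ 2
      ≤ b * ‖gradient f (x t) - g t‖ ^ 2
        + c * (f (x t) + r (x t) - (f (x (t + 1)) + r (x (t + 1)))) := by
    intro t ht
    have hmem := (hstep t ht).mem_frechetSubdiff (hf.differentiable (x (t + 1)))
    have hle := Metric.infDist_le_dist_of_mem (x := 0) hmem
    rw [dist_zero_left] at hle
    exact (mul_le_mul_of_nonneg_left (pow_le_pow_left₀ Metric.infDist_nonneg hle 2) ha.le).trans
      ((hstep t ht).sq_mul_norm_sq_le hf hL.le hη hLη.le)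
  have hsum : a * ∑ t ∈ Icc 1 T, Metric.infDist 0 (frechetSubdiff (f + r) (x (t + 1))) ^ 2
      ≤ b * ∑ t ∈ Icc 1 T, ‖gradient f (x t) - g t‖ ^ 2 + c * (f (x 1) + r (x 1) - m) := by
    calc _ ≤ ∑ t ∈ Icc 1 T, (b * ‖gradient f (x t) - g t‖ ^ 2
            + c * (f (x t) + r (x t) - (f (x (t + 1)) + r (x (t + 1))))) := by
          rw [mul_sum]; exact sum_le_sum hdist
      _ = b * ∑ t ∈ Icc 1 T, ‖gradient f (x t) - g t‖ ^ 2
            + c * (f (x 1) + r (x 1) - (f (x (T + 1)) + r (x (T + 1)))) := by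
          rw [sum_add_distrib, ← mul_sum, ← mul_sum,
            sum_Icc_one_sub_succ (fun t => f (x t) + r (x t))]
      _ ≤ _ := by gcongr; exact hlow _
  have hC1 : b ≤ a * ((1 + 4 * L * η - 2 * L ^ 2 * η ^ 2) / (L * η - 2 * L ^ 2 * η ^ 2)) := by
    rw [← mul_div_assoc, le_div_iff₀ (by nlinarith)]
    nlinarith [mul_nonneg ha.le (by linarith : 0 ≤ 1 - L * η)]
  have hC2 : c ≤ a * ((2 + 4 * L * η + 4 * L ^ 2 * η ^ 2) / (η - 2 * L * η ^ 2)) := by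
    rw [← mul_div_assoc, le_div_iff₀ (by nlinarith)]
    nlinarith [mul_nonneg ha.le (by positivity : 0 ≤ L * η)]
  refine le_of_mul_le_mul_left (hsum.trans ?_) ha
  rw [mul_add, ← mul_assoc, ← mul_assoc]
  gcongr
  linarith [hlow (x 1)]

theorem mul_norm_iterate_sub_sq_le (hf : HasLipschitzGradient f L) (hL : 0 ≤ L) (hη : 0 < η)
    (hLη : 2 * L * η ≤ 1) (hstep : ∀ t ∈ Icc 1 T, IsProxGradStep r η (x t) (g t) (x (t + 1)))
    (hlow : ∀ y, m ≤ f y + r y) {t : ℕ} (ht : t ∈ Icc 1 T) :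
    L * (1 - 2 * L * η) * ‖x (t + 1) - x t‖ ^ 2
      ≤ 2 * η * L * (f (x 1) + r (x 1) - m) + η * ∑ s ∈ Icc 1 t, ‖gradient f (x s) - g s‖ ^ 2 := by
  have hsub : Icc 1 t ⊆ Icc 1 T := Icc_subset_Icc_right (mem_Icc.mp ht).2
  calc L * (1 - 2 * L * η) * ‖x (t + 1) - x t‖ ^ 2
      ≤ ∑ s ∈ Icc 1 t, L * (1 - 2 * L * η) * ‖x (s + 1) - x s‖ ^ 2 :=
        single_le_sum (f := fun s => L * (1 - 2 * L * η) * ‖x (s + 1) - x s‖ ^ 2)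
          (fun s _ => mul_nonneg (mul_nonneg hL (by linarith)) (sq_nonneg _))
          (mem_Icc.mpr ⟨(mem_Icc.mp ht).1, le_rfl⟩)
    _ ≤ ∑ s ∈ Icc 1 t, (2 * η * L * (f (x s) + r (x s) - (f (x (s + 1)) + r (x (s + 1))))
          + η * ‖gradient f (x s) - g s‖ ^ 2) :=
        sum_le_sum fun s hs => (hstep s (hsub hs)).norm_sub_sq_le hf hL hη
    _ = 2 * η * L * (f (x 1) + r (x 1) - (f (x (t + 1)) + r (x (t + 1))))
          + η * ∑ s ∈ Icc 1 t, ‖gradient f (x s) - g s‖ ^ 2 := by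
        rw [sum_add_distrib, ← mul_sum, ← mul_sum,
          sum_Icc_one_sub_succ (fun s => f (x s) + r (x s))]
    _ ≤ _ := by gcongr; exact hlow _

end Trajectory

section Iterates

variable {Ω : Type*} [MeasurableSpace Ω] {μ : Measure Ω} [IsFiniteMeasure μ]
  {f r : E → ℝ} {L η m : ℝ} {x g : ℕ → Ω → E} {T : ℕ}

theorem integrable_norm_gradient_sub_sq (hf : HasLipschitzGradient f L) (hL : 0 < L)
    (hη : 0 < η) (hLη : 2 * L * η < 1)
    (hstep : ∀ t ∈ Icc 1 T, ∀ ω, IsProxGradStep r η (x t ω) (g t ω) (x (t + 1) ω))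
    (hlow : ∀ y, m ≤ f y + r y) {x₁ : E} (hx1 : ∀ ω, x 1 ω = x₁)
    (hxm : ∀ t ∈ Icc 1 T, AEStronglyMeasurable (x t) μ) (hg : ∀ t ∈ Icc 1 T, MemLp (g t) 2 μ) :
    ∀ t ∈ Icc 1 T, Integrable (fun ω => ‖gradient f (x t ω) - g t ω‖ ^ 2) μ := by
  have he : ∀ t ∈ Icc 1 T, MemLp (x t) 2 μ →
      Integrable (fun ω => ‖gradient f (x t ω) - g t ω‖ ^ 2) μ := fun t ht hx =>
    ((hf.memLp_gradient_comp hx).sub (hg t ht)).norm.integrable_sq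
  suffices hx : ∀ t ≤ T, ∀ s ∈ Icc 1 t, MemLp (x s) 2 μ from
    fun t ht => he t ht (hx T le_rfl t ht)
  -- each increment is controlled by the errors of the previous steps
  intro t
  induction t with
  | zero => simp
  | succ t ih =>
    intro htT s hs
    obtain ⟨hs1, hst⟩ := mem_Icc.mp hs
    rcases hst.lt_or_eq with hlt | rfl
    · exact ih (by omega) s (mem_Icc.mpr ⟨hs1, by omega⟩)
    rcases Nat.eq_zero_or_pos t with rfl | ht0
    · simpa [funext hx1] using memLp_const (μ := μ) (p := 2) x₁
    have htI : t ∈ Icc 1 T := mem_Icc.mpr ⟨ht0, by omega⟩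
    have hprev : ∀ s ∈ Icc 1 t, Integrable (fun ω => ‖gradient f (x s ω) - g s ω‖ ^ 2) μ :=
      fun s hs => he s (Icc_subset_Icc_right (by omega) hs) (ih (by omega) s hs)
    have hΔ : MemLp (fun ω => x (t + 1) ω - x t ω) 2 μ := by
      have hbound : Integrable (fun ω => (2 * η * L * (f x₁ + r x₁ - m)
          + η * ∑ s ∈ Icc 1 t, ‖gradient f (x s ω) - g s ω‖ ^ 2) / (L * (1 - 2 * L * η))) μ :=
        ((integrable_const _).add ((integrable_finsetSum _ hprev).const_mul η)).div_const _
      refine memLp_two_of_norm_sq_le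
        ((hxm (t + 1) (mem_Icc.mpr ⟨by omega, htT⟩)).sub (hxm t htI)) hbound fun ω => ?_
      rw [le_div_iff₀ (mul_pos hL (by linarith)), mul_comm]
      simpa [hx1] using mul_norm_iterate_sub_sq_le (x := fun t => x t ω) (g := fun t => g t ω)
        hf hL.le hη hLη.le (fun t ht => hstep t ht ω) hlow htI
    simpa only [Pi.add_def, add_sub_cancel] using
      (ih (by omega) t (mem_Icc.mpr ⟨ht0, le_rfl⟩)).add hΔ

end Iterates

end InnerProductSpace

theorem proxSGD_AS_convergence_general {d n : ℕ}
    {Ω : Type*} [m0 : MeasurableSpace Ω] (μ : Measure Ω) [IsProbabilityMeasure μ]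
    (f : Fin n → EuclideanSpace ℝ (Fin d) → ℝ) (L : Fin n → ℝ)
    (hdiff : ∀ i, Differentiable ℝ (f i))
    (hlip : ∀ i, ∀ x₁ x₂ : EuclideanSpace ℝ (Fin d),
      ‖gradient (f i) x₁ - gradient (f i) x₂‖ ≤ L i * ‖x₁ - x₂‖)
    (favg : EuclideanSpace ℝ (Fin d) → ℝ)
    (hfavg : favg = fun x => (1 / (n : ℝ)) * ∑ i, f i x)
    (Lt : ℝ) (hLt : Lt = (1 / (n : ℝ)) * ∑ i, L i) (hLtpos : 0 < Lt)
    (r : EuclideanSpace ℝ (Fin d) → ℝ)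
    (F : EuclideanSpace ℝ (Fin d) → ℝ) (hF : F = fun x => favg x + r x)
    (xstar : EuclideanSpace ℝ (Fin d)) (hxstar : ∀ y, F xstar ≤ F y)
    (𝓕 : ℕ → MeasurableSpace Ω) (h𝓕 : ∀ t, 𝓕 t ≤ m0)
    (T : ℕ)
    (x g : ℕ → Ω → EuclideanSpace ℝ (Fin d))
    (x₁ : EuclideanSpace ℝ (Fin d)) (hx1 : ∀ ω, x 1 ω = x₁)
    (hxmeas : ∀ t ∈ Finset.Icc 1 T, StronglyMeasurable[𝓕 t] (x t))
    (hg2 : ∀ t ∈ Finset.Icc 1 T, MemLp (g t) 2 μ)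
    (η : ℝ) (hη0 : 0 < η) (hη1 : η < 1 / (2 * Lt))
    (hupdate : ∀ t ∈ Finset.Icc 1 T, ∀ ω, ∀ y : EuclideanSpace ℝ (Fin d),
      r (x (t + 1) ω) + (inner ℝ (g t ω) (x (t + 1) ω - x t ω) : ℝ)
          + (1 / (2 * η)) * ‖x (t + 1) ω - x t ω‖ ^ 2
        ≤ r y + (inner ℝ (g t ω) (y - x t ω) : ℝ) + (1 / (2 * η)) * ‖y - x t ω‖ ^ 2) :
    (1 / (T : ℝ)) * ∑ t ∈ Finset.Icc 1 T,
        ∫ ω, Metric.infDist 0 (frechetSubdiff F (x (t + 1) ω)) ^ 2 ∂μ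
      ≤ ((1 + 4 * Lt * η - 2 * Lt ^ 2 * η ^ 2) / (Lt * η - 2 * Lt ^ 2 * η ^ 2) / T) *
          ∑ t ∈ Finset.Icc 1 T, ∫ ω, ‖gradient favg (x t ω) - g t ω‖ ^ 2 ∂μ
        + ((2 + 4 * Lt * η + 4 * Lt ^ 2 * η ^ 2) / (η - 2 * Lt * η ^ 2) / T) *
            (F x₁ - F xstar) := by
  subst hF
  have hsmooth : HasLipschitzGradient favg Lt := by
    subst hfavg hLt
    exact HasLipschitzGradient.const_mul_sum _ (by positivity) fun i _ => ⟨hdiff i, hlip i⟩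
  have hLη : 2 * Lt * η < 1 := by rwa [lt_div_iff₀ (by positivity), mul_comm] at hη1
  have hlow : ∀ y, favg xstar + r xstar ≤ favg y + r y := hxstar
  have herr := integrable_norm_gradient_sub_sq hsmooth hLtpos hη0 hLη hupdate hlow hx1
    (fun t ht => ((hxmeas t ht).mono (h𝓕 t)).aestronglyMeasurable) hg2
  have hpath := fun ω => by
    simpa only [hx1] using sum_infDist_frechetSubdiff_sq_le (x := fun t => x t ω)
      (g := fun t => g t ω) hsmooth hLtpos hη0 hLη (fun t ht => hupdate t ht ω) hlow
  calc _ ≤ (1 / (T : ℝ)) * ∫ ω, ((1 + 4 * Lt * η - 2 * Lt ^ 2 * η ^ 2)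
            / (Lt * η - 2 * Lt ^ 2 * η ^ 2) * ∑ t ∈ Icc 1 T, ‖gradient favg (x t ω) - g t ω‖ ^ 2
        + (2 + 4 * Lt * η + 4 * Lt ^ 2 * η ^ 2) / (η - 2 * Lt * η ^ 2)
          * (favg x₁ + r x₁ - (favg xstar + r xstar))) ∂μ := by
        gcongr
        exact sum_integral_le_integral_of_sum_le _ (fun _ _ _ => by positivity)
          (((integrable_finsetSum _ herr).const_mul _).add (integrable_const _)) hpath
    _ = _ := by
        rw [integral_add ((integrable_finsetSum _ herr).const_mul _) (integrable_const _),
          integral_const_mul, integral_finsetSum _ herr, integral_const]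
        simp only [probReal_univ, one_smul]
        ring

/-- Theorem 4.2, convergence of ProxSGD-AS. `F = f + r`, with
`f = (1/n)∑ᵢ fᵢ`, each `fᵢ` differentiable with `Lᵢ`-Lipschitz gradient,
`L̃ = (1/n)∑ᵢ Lᵢ > 0`, and `F` attaining a finite infimum `F(x*)`. On a probability space
with a filtration `𝓕ₜ`, the iterates satisfy: `x₁` deterministic; for `t = 1,…,T`, `gₜ` is a
square-integrable random vector with `xₜ` `𝓕ₜ`-measurable and `E[gₜ | 𝓕ₜ] = ∇f(xₜ)` a.s.;
and `x_{t+1}` minimizes `y ↦ r y + ⟪gₜ, y − xₜ⟫ + (1/(2η))‖y − xₜ‖²`. If `0 < η < 1/(2L̃)`,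
then the averaged expected squared subgradient distance is bounded by
`(C₁/T)∑ₜ E‖∇f(xₜ) − gₜ‖² + (C₂/T)(F(x₁) − F(x*))`. -/
theorem proxSGD_AS_convergence {d n : ℕ} (hn : 0 < n)
    {Ω : Type*} [m0 : MeasurableSpace Ω] (μ : Measure Ω) [IsProbabilityMeasure μ]
    (f : Fin n → EuclideanSpace ℝ (Fin d) → ℝ) (L : Fin n → ℝ)
    (hdiff : ∀ i, Differentiable ℝ (f i))
    (hlip : ∀ i, ∀ x₁ x₂ : EuclideanSpace ℝ (Fin d),
      ‖gradient (f i) x₁ - gradient (f i) x₂‖ ≤ L i * ‖x₁ - x₂‖)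
    (favg : EuclideanSpace ℝ (Fin d) → ℝ)
    (hfavg : favg = fun x => (1 / (n : ℝ)) * ∑ i, f i x)
    (Lt : ℝ) (hLt : Lt = (1 / (n : ℝ)) * ∑ i, L i) (hLtpos : 0 < Lt)
    (r : EuclideanSpace ℝ (Fin d) → ℝ)
    (F : EuclideanSpace ℝ (Fin d) → ℝ) (hF : F = fun x => favg x + r x)
    (xstar : EuclideanSpace ℝ (Fin d)) (hxstar : ∀ y, F xstar ≤ F y)
    (𝓕 : ℕ → MeasurableSpace Ω) (h𝓕 : ∀ t, 𝓕 t ≤ m0)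
    (T : ℕ) (hT : 0 < T)
    (x g : ℕ → Ω → EuclideanSpace ℝ (Fin d))
    (x₁ : EuclideanSpace ℝ (Fin d)) (hx1 : ∀ ω, x 1 ω = x₁)
    (hxmeas : ∀ t ∈ Finset.Icc 1 T, StronglyMeasurable[𝓕 t] (x t))
    (hg2 : ∀ t ∈ Finset.Icc 1 T, MemLp (g t) 2 μ)
    (hunbiased : ∀ t ∈ Finset.Icc 1 T,
      μ[g t | 𝓕 t] =ᵐ[μ] fun ω => gradient favg (x t ω))
    (η : ℝ) (hη0 : 0 < η) (hη1 : η < 1 / (2 * Lt))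
    (hupdate : ∀ t ∈ Finset.Icc 1 T, ∀ ω, ∀ y : EuclideanSpace ℝ (Fin d),
      r (x (t + 1) ω) + (inner ℝ (g t ω) (x (t + 1) ω - x t ω) : ℝ)
          + (1 / (2 * η)) * ‖x (t + 1) ω - x t ω‖ ^ 2
        ≤ r y + (inner ℝ (g t ω) (y - x t ω) : ℝ) + (1 / (2 * η)) * ‖y - x t ω‖ ^ 2) :
    (1 / (T : ℝ)) * ∑ t ∈ Finset.Icc 1 T,
        ∫ ω, Metric.infDist 0 (frechetSubdiff F (x (t + 1) ω)) ^ 2 ∂μ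
      ≤ ((1 + 4 * Lt * η - 2 * Lt ^ 2 * η ^ 2) / (Lt * η - 2 * Lt ^ 2 * η ^ 2) / T) *
          ∑ t ∈ Finset.Icc 1 T, ∫ ω, ‖gradient favg (x t ω) - g t ω‖ ^ 2 ∂μ
        + ((2 + 4 * Lt * η + 4 * Lt ^ 2 * η ^ 2) / (η - 2 * Lt * η ^ 2) / T) *
            (F x₁ - F xstar) :=
  proxSGD_AS_convergence_general (m0 := m0) μ f L hdiff hlip favg hfavg Lt hLt hLtpos r F hF xstar
    hxstar 𝓕 h𝓕 T x g x₁ hx1 hxmeas hg2 η hη0 hη1 hupdate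
end

section
/- (Variance bound for the SARAH estimator, Lemma 5.2) Under the ProxSARAH-AS process — where V_0^{(j)} = ∇f(x_0^{(j)}), x_1^{(j)} = x_0^{(j)}, V_t^{(j)} = ∑_{i∈S_t^{(j)}} (1/(n p_i))(∇f_i(x_t^{(j)}) − ∇f_i(x_{t−1}^{(j)})) + V_{t−1}^{(j)} with S_t^{(j)} drawn independently of the past with inclusion probabilities p_i > 0 and pairwise probabilities P_{ij} satisfying P − ppᵀ ⪯ Diag(p∘v), and each f_i differentiable with L_i-Lipschitz gradient — it holds for every 1 ≤ t ≤ m and every epoch j that E[‖V_t^{(j)} − ∇f(x_t^{(j)})‖²] ≤ Q·∑_{k=1}^t E[‖x_k^{(j)} − x_{k−1}^{(j)}‖²], where Q = ∑_{i=1}^n v_i L_i²/(p_i n²) and f = (1/n)∑_{i=1}^n f_i. -/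
/-!
Conditionally on the past, `Sₜ` has law `q`, so the conditional mean of
`‖Vₜ - ∇f(xₜ)‖²` is the average over `A ~ q` of `‖∑_{i∈A} aᵢ + e‖²`, where
`aᵢ = (∇fᵢ(xₜ) - ∇fᵢ(xₜ₋₁))/(n pᵢ)` and `e = Vₜ₋₁ - ∇f(xₜ)`. The first moment of
`∑_{i∈S} aᵢ` is `∑ pᵢ aᵢ = ∇f(xₜ) - ∇f(xₜ₋₁)` and its second moment is `∑ Pᵢⱼ ⟪aᵢ, aⱼ⟫`, so
expanding the square and applying `P - ppᵀ ⪯ Diag(p∘v)` in each coordinate gives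
`E‖Vₜ - ∇f(xₜ)‖² ≤ E‖Vₜ₋₁ - ∇f(xₜ₋₁)‖² + ∑ pᵢvᵢ E‖aᵢ‖²`, and the Lipschitz bounds turn the
last sum into `Q E‖xₜ - xₜ₋₁‖²`. Telescoping from `V₀ = ∇f(x₀)` gives the claim.
-/

open MeasureTheory Finset
open scoped RealInnerProductSpace

theorem sum_smul_sum_eq_sum_sum_filter_smul {α ι M : Type*} [Fintype α] [Fintype ι]
    [DecidableEq ι] [AddCommMonoid M] [Module ℝ M] (q : α → ℝ) (s : α → Finset ι) (w : ι → M) :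
    ∑ a, q a • ∑ i ∈ s a, w i = ∑ i, (∑ a with i ∈ s a, q a) • w i := by
  simp_rw [smul_sum, sum_smul]
  exact sum_comm' (by simp)

theorem sum_sum_mul_inner_le_of_forall_sum_sum_mul_le {ι E : Type*} [Fintype ι]
    [NormedAddCommGroup E] [InnerProductSpace ℝ E] [FiniteDimensional ℝ E] {M : ι → ι → ℝ}
    {w : ι → ℝ} (h : ∀ u : ι → ℝ, ∑ i, ∑ j, M i j * u i * u j ≤ ∑ i, w i * u i ^ 2)
    (a : ι → E) :
    ∑ i, ∑ j, M i j * ⟪a i, a j⟫ ≤ ∑ i, w i * ‖a i‖ ^ 2 := by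
  set b := stdOrthonormalBasis ℝ E
  have hcoord : ∀ i j, M i j * ⟪a i, a j⟫ = ∑ c, M i j * ⟪b c, a i⟫ * ⟪b c, a j⟫ := by
    intro i j
    rw [← b.sum_inner_mul_inner, mul_sum]
    simp_rw [real_inner_comm (b _) (a i), mul_assoc]
  calc ∑ i, ∑ j, M i j * ⟪a i, a j⟫
      = ∑ i, ∑ c, ∑ j, M i j * ⟪b c, a i⟫ * ⟪b c, a j⟫ :=
        sum_congr rfl fun i _ => by simp_rw [hcoord]; exact sum_comm
    _ = ∑ c, ∑ i, ∑ j, M i j * ⟪b c, a i⟫ * ⟪b c, a j⟫ := sum_comm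
    _ ≤ ∑ c, ∑ i, w i * ⟪b c, a i⟫ ^ 2 := sum_le_sum fun c _ => h _
    _ = ∑ i, w i * ‖a i‖ ^ 2 := by
        simp_rw [← b.sum_sq_inner_right, mul_sum]
        exact sum_comm

section Sampling

variable {ι : Type*} [Fintype ι] [DecidableEq ι] {q : Finset ι → ℝ} {p : ι → ℝ}
  {P : ι → ι → ℝ} {v : ι → ℝ}

theorem sum_smul_sum_mem_eq_sum_smul {M : Type*} [AddCommMonoid M] [Module ℝ M]
    (hpq : ∀ i, p i = ∑ A with i ∈ A, q A) (a : ι → M) :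
    ∑ A, q A • ∑ i ∈ A, a i = ∑ i, p i • a i := by
  simp_rw [hpq]
  exact sum_smul_sum_eq_sum_sum_filter_smul q id a

theorem sum_mul_norm_sq_sum_mem_eq {E : Type*} [NormedAddCommGroup E] [InnerProductSpace ℝ E]
    (hPq : ∀ i j, P i j = ∑ A with i ∈ A ∧ j ∈ A, q A) (a : ι → E) :
    ∑ A, q A * ‖∑ i ∈ A, a i‖ ^ 2 = ∑ i, ∑ j, P i j * ⟪a i, a j⟫ := by
  have h := sum_smul_sum_eq_sum_sum_filter_smul q (fun A => A ×ˢ A) fun ij => ⟪a ij.1, a ij.2⟫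
  simp only [smul_eq_mul, sum_product, mem_product, Fintype.sum_prod_type] at h
  simp_rw [← real_inner_self_eq_norm_sq, sum_inner, inner_sum, h, hPq]

theorem sum_mul_norm_sq_sum_mem_add_le {E : Type*} [NormedAddCommGroup E]
    [InnerProductSpace ℝ E] [FiniteDimensional ℝ E] (hq1 : ∑ A, q A = 1)
    (hpq : ∀ i, p i = ∑ A with i ∈ A, q A) (hPq : ∀ i j, P i j = ∑ A with i ∈ A ∧ j ∈ A, q A)
    (hsamp : ∀ u : ι → ℝ,
      ∑ i, ∑ j, (P i j - p i * p j) * u i * u j ≤ ∑ i, p i * v i * u i ^ 2)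
    (a : ι → E) (e : E) :
    ∑ A, q A * ‖∑ i ∈ A, a i + e‖ ^ 2
      ≤ ‖∑ i, p i • a i + e‖ ^ 2 + ∑ i, p i * v i * ‖a i‖ ^ 2 := by
  have hsq : ‖∑ i, p i • a i‖ ^ 2 = ∑ i, ∑ j, p i * p j * ⟪a i, a j⟫ := by
    simp_rw [← real_inner_self_eq_norm_sq, sum_inner, inner_sum, real_inner_smul_left,
      real_inner_smul_right, mul_assoc]
  have hcov := sum_sum_mul_inner_le_of_forall_sum_sum_mul_le hsamp a
  simp_rw [sub_mul, sum_sub_distrib] at hcov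
  calc ∑ A, q A * ‖∑ i ∈ A, a i + e‖ ^ 2
      = ∑ A, q A * ‖∑ i ∈ A, a i‖ ^ 2 + 2 * ⟪∑ A, q A • ∑ i ∈ A, a i, e⟫
          + (∑ A, q A) * ‖e‖ ^ 2 := by
        rw [sum_inner, sum_mul, mul_sum]
        simp_rw [real_inner_smul_left, norm_add_sq_real, mul_add, sum_add_distrib,
          mul_left_comm (q _) (2 : ℝ)]
    _ ≤ ‖∑ i, p i • a i + e‖ ^ 2 + ∑ i, p i * v i * ‖a i‖ ^ 2 := by
        rw [sum_smul_sum_mem_eq_sum_smul hpq, sum_mul_norm_sq_sum_mem_eq hPq, hq1,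
          norm_add_sq_real, hsq]
        linarith

theorem sampling_coeff_nonneg (hq0 : ∀ A, 0 ≤ q A) (hq1 : ∑ A, q A = 1)
    (hppos : ∀ i, 0 < p i) (hpq : ∀ i, p i = ∑ A with i ∈ A, q A)
    (hPq : ∀ i j, P i j = ∑ A with i ∈ A ∧ j ∈ A, q A)
    (hsamp : ∀ u : ι → ℝ,
      ∑ i, ∑ j, (P i j - p i * p j) * u i * u j ≤ ∑ i, p i * v i * u i ^ 2) (i : ι) :
    0 ≤ v i := by
  have hp_le_one : p i ≤ 1 := by
    rw [hpq i, ← hq1]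
    exact sum_le_sum_of_subset_of_nonneg (filter_subset _ _) fun A _ _ => hq0 A
  have hPii : P i i = p i := by simp only [hPq, hpq, and_self]
  have h : P i i - p i * p i ≤ p i * v i := by
    simpa [Pi.single_apply] using hsamp (Pi.single i 1)
  rw [hPii] at h
  nlinarith [hppos i]

end Sampling

section ConditionalLaw

variable {Ω : Type*} {m m0 : MeasurableSpace Ω} {μ : Measure Ω} [IsFiniteMeasure μ]

theorem integral_indicator_eq_mul_integral_of_condExp_indicator_eq (hm : m ≤ m0) {s : Set Ω}
    (hs : MeasurableSet s) {c : ℝ}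
    (hcond : μ[s.indicator (fun _ => (1 : ℝ)) | m] =ᵐ[μ] fun _ => c)
    {F : Ω → ℝ} (hFm : StronglyMeasurable[m] F) (hFi : Integrable F μ) :
    ∫ ω, s.indicator F ω ∂μ = c * ∫ ω, F ω ∂μ := by
  have hind : s.indicator F = F * s.indicator (fun _ => (1 : ℝ)) := by
    ext ω; by_cases hω : ω ∈ s <;> simp [hω]
  have hpull := condExp_mul_of_stronglyMeasurable_left hFm (hind ▸ hFi.indicator hs)
    ((integrable_const 1).indicator hs)
  calc ∫ ω, s.indicator F ω ∂μ = ∫ ω, (μ[F * s.indicator (fun _ => (1 : ℝ)) | m]) ω ∂μ := by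
        rw [integral_condExp hm, hind]
    _ = ∫ ω, F ω * c ∂μ := by
        refine integral_congr_ae ?_
        filter_upwards [hpull, hcond] with ω hω hc
        rw [hω, Pi.mul_apply, hc]
    _ = c * ∫ ω, F ω ∂μ := by rw [integral_mul_const, mul_comm]

variable {α : Type*} [Fintype α] {S : Ω → α} {q : α → ℝ}

theorem integral_apply_eq_sum_mul_integral_of_condExp_indicator_eq (hm : m ≤ m0)
    (hS : ∀ a, MeasurableSet {ω | S ω = a})
    (hlaw : ∀ a, μ[{ω | S ω = a}.indicator (fun _ => (1 : ℝ)) | m] =ᵐ[μ] fun _ => q a)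
    {F : α → Ω → ℝ} (hFm : ∀ a, StronglyMeasurable[m] (F a)) (hFi : ∀ a, Integrable (F a) μ) :
    ∫ ω, F (S ω) ω ∂μ = ∑ a, q a * ∫ ω, F a ω ∂μ := by
  have hsplit : ∀ ω, F (S ω) ω = ∑ a, {ω | S ω = a}.indicator (F a) ω := fun ω => by
    rw [sum_eq_single (S ω) (fun a _ ha => by simp [Ne.symm ha]) (by simp)]
    simp
  simp_rw [hsplit]
  rw [integral_finsetSum _ fun a _ => (hFi a).indicator (hS a)]
  exact sum_congr rfl fun a _ =>
    integral_indicator_eq_mul_integral_of_condExp_indicator_eq hm (hS a) (hlaw a) (hFm a) (hFi a)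

theorem integral_apply_le_of_sum_mul_le_of_condExp_indicator_eq (hm : m ≤ m0)
    (hS : ∀ a, MeasurableSet {ω | S ω = a})
    (hlaw : ∀ a, μ[{ω | S ω = a}.indicator (fun _ => (1 : ℝ)) | m] =ᵐ[μ] fun _ => q a)
    {F : α → Ω → ℝ} (hFm : ∀ a, StronglyMeasurable[m] (F a)) (hFi : ∀ a, Integrable (F a) μ)
    {R : Ω → ℝ} (hR : Integrable R μ) (hle : ∀ ω, ∑ a, q a * F a ω ≤ R ω) :
    ∫ ω, F (S ω) ω ∂μ ≤ ∫ ω, R ω ∂μ := by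
  rw [integral_apply_eq_sum_mul_integral_of_condExp_indicator_eq hm hS hlaw hFm hFi]
  simp_rw [← integral_const_mul]
  rw [← integral_finsetSum _ fun a _ => (hFi a).const_mul (q a)]
  exact integral_mono (integrable_finsetSum _ fun a _ => (hFi a).const_mul (q a)) hR hle

end ConditionalLaw

theorem LipschitzWith.memLp_comp {Ω E F : Type*} [MeasurableSpace Ω] {μ : Measure Ω}
    [IsFiniteMeasure μ] [NormedAddCommGroup E] [NormedAddCommGroup F] {K : NNReal} {g : E → F}
    (hg : LipschitzWith K g) {p : ENNReal} {x : Ω → E} (hx : MemLp x p μ) :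
    MemLp (fun ω => g (x ω)) p μ := by
  have h := (hg.sub (LipschitzWith.const (g 0))).comp_memLp (by simp) hx
  convert h.add (memLp_const (g 0)) using 1
  ext ω
  simp

theorem gradient_const_mul_sum {E ι : Type*} [NormedAddCommGroup E] [InnerProductSpace ℝ E]
    [CompleteSpace E] [Fintype ι] {f : ι → E → ℝ} (hf : ∀ i, Differentiable ℝ (f i)) (c : ℝ)
    (y : E) : gradient (fun x => c * ∑ i, f i x) y = c • ∑ i, gradient (f i) y := by
  refine HasGradientAt.gradient ?_
  rw [hasGradientAt_iff_hasFDerivAt, map_smul, map_sum]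
  simp_rw [toDual_gradient]
  exact (HasFDerivAt.fun_sum fun i _ => (hf i y).hasFDerivAt).const_mul c

theorem le_add_mul_sum_Icc_of_le_add {a b : ℕ → ℝ} {Q : ℝ} {m : ℕ}
    (h : ∀ t ∈ Icc 1 m, a t ≤ a (t - 1) + Q * b t) :
    ∀ t ≤ m, a t ≤ a 0 + Q * ∑ k ∈ Icc 1 t, b k := by
  intro t ht
  induction t with
  | zero => simp
  | succ t ih =>
    rw [sum_Icc_succ_top (by omega), mul_add]
    have hstep := h (t + 1) (mem_Icc.mpr ⟨by omega, ht⟩)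
    rw [Nat.add_sub_cancel] at hstep
    linarith [ih (by omega)]

section Sarah

variable {E : Type*} [NormedAddCommGroup E] [InnerProductSpace ℝ E] [FiniteDimensional ℝ E]
  {n : ℕ} {q : Finset (Fin n) → ℝ} {p : Fin n → ℝ} {P : Fin n → Fin n → ℝ} {v L : Fin n → ℝ}
  {g : Fin n → E → E} {G : E → E} {Q : ℝ}

theorem sum_mul_norm_sq_sarah_update_le (hq1 : ∑ A, q A = 1)
    (hppos : ∀ i, 0 < p i) (hpq : ∀ i, p i = ∑ A with i ∈ A, q A)
    (hPq : ∀ i j, P i j = ∑ A with i ∈ A ∧ j ∈ A, q A)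
    (hsamp : ∀ u : Fin n → ℝ,
      ∑ i, ∑ j, (P i j - p i * p j) * u i * u j ≤ ∑ i, p i * v i * u i ^ 2)
    (hv : ∀ i, 0 ≤ v i) (hg : ∀ i x y, ‖g i x - g i y‖ ≤ L i * ‖x - y‖)
    (hG : ∀ y, G y = (1 / (n : ℝ)) • ∑ i, g i y)
    (hQ : Q = ∑ i, v i * L i ^ 2 / (p i * (n : ℝ) ^ 2)) (x x' V' : E) :
    ∑ A, q A * ‖∑ i ∈ A, (1 / ((n : ℝ) * p i)) • (g i x - g i x') + (V' - G x)‖ ^ 2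
      ≤ ‖V' - G x'‖ ^ 2 + Q * ‖x - x'‖ ^ 2 := by
  set a : Fin n → E := fun i => (1 / ((n : ℝ) * p i)) • (g i x - g i x')
  have hmean : ∑ i, p i • a i + (V' - G x) = V' - G x' := by
    have hpa : ∀ i, p i • a i = (1 / (n : ℝ)) • (g i x - g i x') := fun i => by
      simp only [a, smul_smul]
      congr 1
      field_simp [(hppos i).ne']
    simp_rw [hpa, ← smul_sum, sum_sub_distrib, smul_sub, hG]
    abel
  have hterm : ∀ i, p i * v i * ‖a i‖ ^ 2
      ≤ v i * L i ^ 2 / (p i * (n : ℝ) ^ 2) * ‖x - x'‖ ^ 2 := by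
    intro i
    have hpi := (hppos i).ne'
    have hd : ‖g i x - g i x'‖ ^ 2 ≤ L i ^ 2 * ‖x - x'‖ ^ 2 := by
      rw [← mul_pow]
      exact pow_le_pow_left₀ (norm_nonneg _) (hg i x x') 2
    calc p i * v i * ‖a i‖ ^ 2 = v i / (p i * (n : ℝ) ^ 2) * ‖g i x - g i x'‖ ^ 2 := by
          simp only [a, norm_smul, mul_pow, Real.norm_eq_abs, sq_abs]
          field_simp
      _ ≤ v i / (p i * (n : ℝ) ^ 2) * (L i ^ 2 * ‖x - x'‖ ^ 2) := by
          gcongr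
          exact div_nonneg (hv i) (by positivity [hppos i])
      _ = v i * L i ^ 2 / (p i * (n : ℝ) ^ 2) * ‖x - x'‖ ^ 2 := by ring
  calc ∑ A, q A * ‖∑ i ∈ A, a i + (V' - G x)‖ ^ 2
      ≤ ‖∑ i, p i • a i + (V' - G x)‖ ^ 2 + ∑ i, p i * v i * ‖a i‖ ^ 2 :=
        sum_mul_norm_sq_sum_mem_add_le hq1 hpq hPq hsamp a _
    _ ≤ ‖V' - G x'‖ ^ 2 + Q * ‖x - x'‖ ^ 2 := by
        rw [hmean, hQ, sum_mul]
        exact add_le_add le_rfl (sum_le_sum fun i _ => hterm i)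

theorem integral_norm_sq_sarah_error_le {Ω : Type*} {m m0 : MeasurableSpace Ω}
    {μ : Measure Ω} [IsFiniteMeasure μ] (hm : m ≤ m0) (hq1 : ∑ A, q A = 1)
    (hppos : ∀ i, 0 < p i) (hpq : ∀ i, p i = ∑ A with i ∈ A, q A)
    (hPq : ∀ i j, P i j = ∑ A with i ∈ A ∧ j ∈ A, q A)
    (hsamp : ∀ u : Fin n → ℝ,
      ∑ i, ∑ j, (P i j - p i * p j) * u i * u j ≤ ∑ i, p i * v i * u i ^ 2)
    (hv : ∀ i, 0 ≤ v i) (hg : ∀ i x y, ‖g i x - g i y‖ ≤ L i * ‖x - y‖)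
    (hG : ∀ y, G y = (1 / (n : ℝ)) • ∑ i, g i y)
    (hQ : Q = ∑ i, v i * L i ^ 2 / (p i * (n : ℝ) ^ 2))
    {x x' V' V : Ω → E} {S : Ω → Finset (Fin n)}
    (hxm : StronglyMeasurable[m] x) (hx'm : StronglyMeasurable[m] x')
    (hV'm : StronglyMeasurable[m] V') (hx : MemLp x 2 μ) (hx' : MemLp x' 2 μ)
    (hV' : MemLp V' 2 μ) (hS : ∀ A, MeasurableSet {ω | S ω = A})
    (hlaw : ∀ A, μ[{ω | S ω = A}.indicator (fun _ => (1 : ℝ)) | m] =ᵐ[μ] fun _ => q A)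
    (hV : ∀ ω, V ω = ∑ i ∈ S ω, (1 / ((n : ℝ) * p i)) • (g i (x ω) - g i (x' ω)) + V' ω) :
    ∫ ω, ‖V ω - G (x ω)‖ ^ 2 ∂μ
      ≤ ∫ ω, ‖V' ω - G (x' ω)‖ ^ 2 ∂μ + Q * ∫ ω, ‖x ω - x' ω‖ ^ 2 ∂μ := by
  have hgLip : ∀ i, LipschitzWith (L i).toNNReal (g i) := fun i =>
    LipschitzWith.of_dist_le' fun a b => by simpa only [dist_eq_norm] using hg i a b
  have hGeq : G = fun y => (1 / (n : ℝ)) • ∑ i, g i y := funext hG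
  have hGcont : Continuous G := by
    rw [hGeq]
    exact (continuous_finsetSum _ fun i _ => (hgLip i).continuous).const_smul _
  have hGx : ∀ {y : Ω → E}, MemLp y 2 μ → MemLp (fun ω => G (y ω)) 2 μ := fun hy => by
    rw [hGeq]
    exact (memLp_finsetSum _ fun i _ => (hgLip i).memLp_comp hy).const_smul _
  set W : Finset (Fin n) → Ω → E := fun A ω =>
    ∑ i ∈ A, (1 / ((n : ℝ) * p i)) • (g i (x ω) - g i (x' ω)) + (V' ω - G (x ω))
  have hWm : ∀ A, StronglyMeasurable[m] (W A) := fun A =>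
    (Finset.stronglyMeasurable_fun_sum _ fun i _ =>
      (((hgLip i).continuous.comp_stronglyMeasurable hxm).sub
        ((hgLip i).continuous.comp_stronglyMeasurable hx'm)).const_smul _).add
      (hV'm.sub (hGcont.comp_stronglyMeasurable hxm))
  have hWL2 : ∀ A, MemLp (W A) 2 μ := fun A =>
    (memLp_finsetSum _ fun i _ =>
      (((hgLip i).memLp_comp hx).sub ((hgLip i).memLp_comp hx')).const_smul _).add
      (hV'.sub (hGx hx))
  have hprev : Integrable (fun ω => ‖V' ω - G (x' ω)‖ ^ 2) μ :=
    (hV'.sub (hGx hx')).norm.integrable_sq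
  have hdx : Integrable (fun ω => ‖x ω - x' ω‖ ^ 2) μ := (hx.sub hx').norm.integrable_sq
  calc ∫ ω, ‖V ω - G (x ω)‖ ^ 2 ∂μ = ∫ ω, ‖W (S ω) ω‖ ^ 2 ∂μ := by
        simp_rw [hV, W, add_sub_assoc]
    _ ≤ ∫ ω, (‖V' ω - G (x' ω)‖ ^ 2 + Q * ‖x ω - x' ω‖ ^ 2) ∂μ :=
        integral_apply_le_of_sum_mul_le_of_condExp_indicator_eq hm hS hlaw
          (fun A => (hWm A).norm.pow 2) (fun A => (hWL2 A).norm.integrable_sq)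
          (hprev.add (hdx.const_mul Q)) fun ω =>
          sum_mul_norm_sq_sarah_update_le hq1 hppos hpq hPq hsamp hv hg hG hQ _ _ _
    _ = ∫ ω, ‖V' ω - G (x' ω)‖ ^ 2 ∂μ + Q * ∫ ω, ‖x ω - x' ω‖ ^ 2 ∂μ := by
        rw [integral_add hprev (hdx.const_mul Q), integral_const_mul]

end Sarah

theorem sarah_estimator_variance_bound_general {d n : ℕ}
    {Ω : Type*} [m0 : MeasurableSpace Ω] (μ : Measure Ω) [IsProbabilityMeasure μ]
    (f : Fin n → EuclideanSpace ℝ (Fin d) → ℝ) (L : Fin n → ℝ)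
    (hdiff : ∀ i, Differentiable ℝ (f i))
    (hlip : ∀ i, ∀ x₁ x₂ : EuclideanSpace ℝ (Fin d),
      ‖gradient (f i) x₁ - gradient (f i) x₂‖ ≤ L i * ‖x₁ - x₂‖)
    (favg : EuclideanSpace ℝ (Fin d) → ℝ)
    (hfavg : favg = fun x => (1 / (n : ℝ)) * ∑ i, f i x)
    (q : Finset (Fin n) → ℝ) (hq0 : ∀ A, 0 ≤ q A) (hq1 : ∑ A : Finset (Fin n), q A = 1)
    (p : Fin n → ℝ) (hppos : ∀ i, 0 < p i)
    (hpq : ∀ i, p i = ∑ A ∈ Finset.univ.filter (fun A : Finset (Fin n) => i ∈ A), q A)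
    (P : Fin n → Fin n → ℝ)
    (hPq : ∀ i j, P i j =
      ∑ A ∈ Finset.univ.filter (fun A : Finset (Fin n) => i ∈ A ∧ j ∈ A), q A)
    (v : Fin n → ℝ)
    (hsamp : ∀ u : Fin n → ℝ,
      ∑ i, ∑ j, (P i j - p i * p j) * u i * u j ≤ ∑ i, p i * v i * u i ^ 2)
    (J m : ℕ)
    (x V : ℕ → ℕ → Ω → EuclideanSpace ℝ (Fin d))
    (S : ℕ → ℕ → Ω → Finset (Fin n))
    (hV0 : ∀ j ∈ Finset.Icc 1 J, ∀ ω, V j 0 ω = gradient favg (x j 0 ω))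
    (𝓖 : ℕ → ℕ → MeasurableSpace Ω) (h𝓖 : ∀ j t, 𝓖 j t ≤ m0)
    (hmeas : ∀ j ∈ Finset.Icc 1 J, ∀ t ∈ Finset.Icc 1 m,
      StronglyMeasurable[𝓖 j t] (x j t) ∧ StronglyMeasurable[𝓖 j t] (x j (t - 1)) ∧
        StronglyMeasurable[𝓖 j t] (V j (t - 1)))
    (hSmeas : ∀ j ∈ Finset.Icc 1 J, ∀ t ∈ Finset.Icc 1 m, ∀ A : Finset (Fin n),
      MeasurableSet {ω | S j t ω = A})
    (hSlaw : ∀ j ∈ Finset.Icc 1 J, ∀ t ∈ Finset.Icc 1 m, ∀ A : Finset (Fin n),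
      μ[({ω | S j t ω = A}).indicator (fun _ => (1 : ℝ)) | 𝓖 j t] =ᵐ[μ] fun _ => q A)
    (hVrec : ∀ j ∈ Finset.Icc 1 J, ∀ t ∈ Finset.Icc 1 m, ∀ ω,
      V j t ω = (∑ i ∈ S j t ω, (1 / ((n : ℝ) * p i)) •
          (gradient (f i) (x j t ω) - gradient (f i) (x j (t - 1) ω))) + V j (t - 1) ω)
    (hL2 : ∀ j ∈ Finset.Icc 1 J, ∀ t ∈ Finset.Icc 0 m,
      MemLp (x j t) 2 μ ∧ MemLp (V j t) 2 μ)
    (Q : ℝ) (hQ : Q = ∑ i, v i * L i ^ 2 / (p i * (n : ℝ) ^ 2)) :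
    ∀ j ∈ Finset.Icc 1 J, ∀ t ∈ Finset.Icc 1 m,
      ∫ ω, ‖V j t ω - gradient favg (x j t ω)‖ ^ 2 ∂μ
        ≤ Q * ∑ k ∈ Finset.Icc 1 t, ∫ ω, ‖x j k ω - x j (k - 1) ω‖ ^ 2 ∂μ := by
  intro j hj t ht
  have hv := sampling_coeff_nonneg hq0 hq1 hppos hpq hPq hsamp
  have hG : ∀ y, gradient favg y = (1 / (n : ℝ)) • ∑ i, gradient (f i) y := fun y => by
    rw [hfavg]
    exact gradient_const_mul_sum hdiff _ y
  have hstep : ∀ t ∈ Icc 1 m, ∫ ω, ‖V j t ω - gradient favg (x j t ω)‖ ^ 2 ∂μ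
      ≤ ∫ ω, ‖V j (t - 1) ω - gradient favg (x j (t - 1) ω)‖ ^ 2 ∂μ
        + Q * ∫ ω, ‖x j t ω - x j (t - 1) ω‖ ^ 2 ∂μ := fun t ht => by
    obtain ⟨hxm, hx'm, hV'm⟩ := hmeas j hj t ht
    have htm := (mem_Icc.mp ht).2
    have hL2t := hL2 j hj t (mem_Icc.mpr ⟨t.zero_le, htm⟩)
    have hL2t' := hL2 j hj (t - 1) (mem_Icc.mpr ⟨(t - 1).zero_le, by omega⟩)
    exact integral_norm_sq_sarah_error_le (h𝓖 j t) hq1 hppos hpq hPq hsamp hv hlip hG hQ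
      hxm hx'm hV'm hL2t.1 hL2t'.1 hL2t'.2 (hSmeas j hj t ht) (hSlaw j hj t ht) (hVrec j hj t ht)
  have hinit : ∫ ω, ‖V j 0 ω - gradient favg (x j 0 ω)‖ ^ 2 ∂μ = 0 := by
    simp [hV0 j hj]
  simpa [hinit] using le_add_mul_sum_Icc_of_le_add hstep t (mem_Icc.mp ht).2

/-- Lemma 5.2, variance bound for the SARAH estimator. Under the
ProxSARAH-AS process — `V₀⁽ʲ⁾ = ∇f(x₀⁽ʲ⁾)`, `x₁⁽ʲ⁾ = x₀⁽ʲ⁾`,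
`Vₜ⁽ʲ⁾ = ∑_{i∈Sₜ⁽ʲ⁾} (1/(n pᵢ))(∇fᵢ(xₜ⁽ʲ⁾) − ∇fᵢ(x_{t−1}⁽ʲ⁾)) + V_{t−1}⁽ʲ⁾` with
`Sₜ⁽ʲ⁾` drawn independently of the past with law `q`, inclusion probabilities `pᵢ > 0`,
pairwise probabilities `P` satisfying `P − ppᵀ ⪯ Diag(p∘v)`, and each `fᵢ` differentiable
with `Lᵢ`-Lipschitz gradient — for every `1 ≤ t ≤ m` and every epoch `j`,
`E[‖Vₜ⁽ʲ⁾ − ∇f(xₜ⁽ʲ⁾)‖²] ≤ Q ∑_{k=1}^t E[‖xₖ⁽ʲ⁾ − x_{k−1}⁽ʲ⁾‖²]` where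
`Q = ∑ᵢ vᵢLᵢ²/(pᵢn²)`. -/
theorem sarah_estimator_variance_bound {d n : ℕ} (hn : 0 < n)
    {Ω : Type*} [m0 : MeasurableSpace Ω] (μ : Measure Ω) [IsProbabilityMeasure μ]
    (f : Fin n → EuclideanSpace ℝ (Fin d) → ℝ) (L : Fin n → ℝ)
    (hdiff : ∀ i, Differentiable ℝ (f i))
    (hlip : ∀ i, ∀ x₁ x₂ : EuclideanSpace ℝ (Fin d),
      ‖gradient (f i) x₁ - gradient (f i) x₂‖ ≤ L i * ‖x₁ - x₂‖)
    (favg : EuclideanSpace ℝ (Fin d) → ℝ)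
    (hfavg : favg = fun x => (1 / (n : ℝ)) * ∑ i, f i x)
    (q : Finset (Fin n) → ℝ) (hq0 : ∀ A, 0 ≤ q A) (hq1 : ∑ A : Finset (Fin n), q A = 1)
    (p : Fin n → ℝ) (hppos : ∀ i, 0 < p i)
    (hpq : ∀ i, p i = ∑ A ∈ Finset.univ.filter (fun A : Finset (Fin n) => i ∈ A), q A)
    (P : Fin n → Fin n → ℝ)
    (hPq : ∀ i j, P i j =
      ∑ A ∈ Finset.univ.filter (fun A : Finset (Fin n) => i ∈ A ∧ j ∈ A), q A)
    (v : Fin n → ℝ)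
    (hsamp : ∀ u : Fin n → ℝ,
      ∑ i, ∑ j, (P i j - p i * p j) * u i * u j ≤ ∑ i, p i * v i * u i ^ 2)
    (J m : ℕ) (hJ : 0 < J) (hm : 0 < m)
    (x V : ℕ → ℕ → Ω → EuclideanSpace ℝ (Fin d))
    (S : ℕ → ℕ → Ω → Finset (Fin n))
    (hx10 : ∀ j ∈ Finset.Icc 1 J, ∀ ω, x j 1 ω = x j 0 ω)
    (hV0 : ∀ j ∈ Finset.Icc 1 J, ∀ ω, V j 0 ω = gradient favg (x j 0 ω))
    (𝓖 : ℕ → ℕ → MeasurableSpace Ω) (h𝓖 : ∀ j t, 𝓖 j t ≤ m0)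
    (hmeas : ∀ j ∈ Finset.Icc 1 J, ∀ t ∈ Finset.Icc 1 m,
      StronglyMeasurable[𝓖 j t] (x j t) ∧ StronglyMeasurable[𝓖 j t] (x j (t - 1)) ∧
        StronglyMeasurable[𝓖 j t] (V j (t - 1)))
    (hSmeas : ∀ j ∈ Finset.Icc 1 J, ∀ t ∈ Finset.Icc 1 m, ∀ A : Finset (Fin n),
      MeasurableSet {ω | S j t ω = A})
    (hSlaw : ∀ j ∈ Finset.Icc 1 J, ∀ t ∈ Finset.Icc 1 m, ∀ A : Finset (Fin n),
      μ[({ω | S j t ω = A}).indicator (fun _ => (1 : ℝ)) | 𝓖 j t] =ᵐ[μ] fun _ => q A)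
    (hVrec : ∀ j ∈ Finset.Icc 1 J, ∀ t ∈ Finset.Icc 1 m, ∀ ω,
      V j t ω = (∑ i ∈ S j t ω, (1 / ((n : ℝ) * p i)) •
          (gradient (f i) (x j t ω) - gradient (f i) (x j (t - 1) ω))) + V j (t - 1) ω)
    (hL2 : ∀ j ∈ Finset.Icc 1 J, ∀ t ∈ Finset.Icc 0 m,
      MemLp (x j t) 2 μ ∧ MemLp (V j t) 2 μ)
    (Q : ℝ) (hQ : Q = ∑ i, v i * L i ^ 2 / (p i * (n : ℝ) ^ 2)) :
    ∀ j ∈ Finset.Icc 1 J, ∀ t ∈ Finset.Icc 1 m,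
      ∫ ω, ‖V j t ω - gradient favg (x j t ω)‖ ^ 2 ∂μ
        ≤ Q * ∑ k ∈ Finset.Icc 1 t, ∫ ω, ‖x j k ω - x j (k - 1) ω‖ ^ 2 ∂μ :=
  sarah_estimator_variance_bound_general (m0 := m0) μ f L hdiff hlip favg hfavg q hq0 hq1 p hppos
    hpq P hPq v hsamp J m x V S hV0 𝓖 h𝓖 hmeas hSmeas hSlaw hVrec hL2 Q hQ
end

section
/- (Lemma D.1, variance bound) Let ξ_1, …, ξ_n ∈ ℝ^d, let S be a proper random subset of {1,…,n} with p_i = Prob(i ∈ S) > 0 and pairwise probabilities P_{ij} = Prob({i,j} ⊆ S), and suppose v ∈ ℝ^n satisfies the sampling condition P − ppᵀ ⪯ Diag(p∘v), i.e. ∑_{i,j}(P_{ij} − p_i p_j) u_i u_j ≤ ∑_i p_i v_i u_i² for all u ∈ ℝ^n. Then E[‖∑_{i∈S} ξ_i/(n p_i) − ξ̄‖²] ≤ (1/n²)∑_{i=1}^n (v_i/p_i)‖ξ_i‖², where ξ̄ = (1/n)∑_{i=1}^n ξ_i. -/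
/-!
With `E i = {ω | i ∈ S ω}` and `a i = ξ i / (n p i)`, we have `p i • a i = ξ i / n`, so the
deviation is `∑ i, (1_{E i} - p i) • a i`. Its mean squared norm is
`∑ i j, cov(1_{E i}, 1_{E j}) ⟪a i, a j⟫ = ∑ i j, (P i j - p i p j) ⟪a i, a j⟫`, and the scalar
sampling condition, applied to the coordinates of the `a i` in an orthonormal basis, bounds it by
`∑ i, p i v i ‖a i‖²`.
-/

open MeasureTheory ProbabilityTheory Finset

theorem norm_sum_smul_sq {ι F : Type*} [NormedAddCommGroup F] [InnerProductSpace ℝ F]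
    (s : Finset ι) (c : ι → ℝ) (a : ι → F) :
    ‖∑ i ∈ s, c i • a i‖ ^ 2 = ∑ i ∈ s, ∑ j ∈ s, c i * c j * inner ℝ (a i) (a j) := by
  rw [← real_inner_self_eq_norm_sq, sum_inner]
  refine sum_congr rfl fun i _ => ?_
  rw [inner_sum]
  refine sum_congr rfl fun j _ => ?_
  rw [real_inner_smul_left, real_inner_smul_right]
  ring

theorem sum_mul_inner_le_of_forall_real {ι F : Type*} [Fintype ι]
    [NormedAddCommGroup F] [InnerProductSpace ℝ F] [FiniteDimensional ℝ F]
    (C : ι → ι → ℝ) (D : ι → ℝ)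
    (h : ∀ u : ι → ℝ, ∑ i, ∑ j, C i j * u i * u j ≤ ∑ i, D i * u i ^ 2) (a : ι → F) :
    ∑ i, ∑ j, C i j * inner ℝ (a i) (a j) ≤ ∑ i, D i * ‖a i‖ ^ 2 := by
  let b := stdOrthonormalBasis ℝ F
  have hinner : ∀ i j, inner ℝ (a i) (a j) = ∑ k, inner ℝ (a i) (b k) * inner ℝ (a j) (b k) :=
    fun i j => by simp_rw [← b.sum_inner_mul_inner (a i) (a j), real_inner_comm (b _) (a j)]
  have hnorm : ∀ i, ‖a i‖ ^ 2 = ∑ k, inner ℝ (a i) (b k) ^ 2 := fun i => by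
    simp_rw [← real_inner_self_eq_norm_sq, hinner, sq]
  calc ∑ i, ∑ j, C i j * inner ℝ (a i) (a j)
      = ∑ k, ∑ i, ∑ j, C i j * inner ℝ (a i) (b k) * inner ℝ (a j) (b k) := by
        simp_rw [hinner, mul_sum, ← mul_assoc]
        exact (sum_congr rfl fun _ _ => sum_comm).trans sum_comm
    _ ≤ ∑ k, ∑ i, D i * inner ℝ (a i) (b k) ^ 2 := sum_le_sum fun k _ => h _
    _ = ∑ i, D i * ‖a i‖ ^ 2 := by
        simp_rw [hnorm, mul_sum]
        exact sum_comm

section Indicator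

variable {Ω : Type*} [MeasurableSpace Ω] {μ : Measure Ω}

theorem measurableSet_setOf_of_measurableSet_eq {α : Type*} [Countable α] {S : Ω → α}
    (hS : ∀ a, MeasurableSet {ω | S ω = a}) (q : α → Prop) : MeasurableSet {ω | q (S ω)} := by
  have hunion : {ω | q (S ω)} = ⋃ a ∈ {a | q a}, {ω | S ω = a} := by ext; simp
  rw [hunion]
  exact .biUnion (Set.to_countable _) fun a _ => hS a

theorem memLp_indicator_one [IsFiniteMeasure μ] {A : Set Ω} (hA : MeasurableSet A)
    (p : ENNReal) : MemLp (A.indicator (1 : Ω → ℝ)) p μ :=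
  memLp_indicator_const p hA 1 (Or.inr (measure_ne_top μ A))

variable [IsProbabilityMeasure μ]

theorem covariance_indicator_one {A B : Set Ω} (hA : MeasurableSet A) (hB : MeasurableSet B) :
    cov[A.indicator 1, B.indicator 1; μ] = μ.real (A ∩ B) - μ.real A * μ.real B := by
  rw [covariance_eq_sub (memLp_indicator_one hA 2) (memLp_indicator_one hB 2),
    ← Set.inter_indicator_one, integral_indicator_one (hA.inter hB), integral_indicator_one hA,
    integral_indicator_one hB]

theorem integral_norm_sum_indicator_sub_smul_sq {ι F : Type*} [Fintype ι]
    [NormedAddCommGroup F] [InnerProductSpace ℝ F]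
    {E : ι → Set Ω} (hE : ∀ i, MeasurableSet (E i)) (a : ι → F) :
    ∫ ω, ‖∑ i, ((E i).indicator 1 ω - μ.real (E i)) • a i‖ ^ 2 ∂μ
      = ∑ i, ∑ j, (μ.real (E i ∩ E j) - μ.real (E i) * μ.real (E j)) * inner ℝ (a i) (a j) := by
  have hmem : ∀ i, MemLp (fun ω => (E i).indicator (1 : Ω → ℝ) ω - μ.real (E i)) 2 μ :=
    fun i => (memLp_indicator_one (hE i) 2).sub (memLp_const _)
  have hint : ∀ i j, Integrable (fun ω => ((E i).indicator 1 ω - μ.real (E i)) *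
      ((E j).indicator 1 ω - μ.real (E j)) * inner ℝ (a i) (a j)) μ :=
    fun i j => ((hmem i).integrable_mul (hmem j)).mul_const _
  simp_rw [norm_sum_smul_sq]
  rw [integral_finsetSum _ fun i _ => integrable_finsetSum _ fun j _ => hint i j]
  refine sum_congr rfl fun i _ => ?_
  rw [integral_finsetSum _ fun j _ => hint i j]
  refine sum_congr rfl fun j _ => ?_
  rw [integral_mul_const, ← covariance_indicator_one (hE i) (hE j), covariance,
    integral_indicator_one (hE i), integral_indicator_one (hE j)]

end Indicator

theorem arbitrary_sampling_variance_bound_general {Ω : Type*} [m0 : MeasurableSpace Ω]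
    (μ : Measure Ω) [IsProbabilityMeasure μ]
    {d n : ℕ} (ξ : Fin n → EuclideanSpace ℝ (Fin d))
    (S : Ω → Finset (Fin n))
    (hSmeas : ∀ A : Finset (Fin n), MeasurableSet {ω | S ω = A})
    (p : Fin n → ℝ) (hp : ∀ i, p i = (μ {ω | i ∈ S ω}).toReal)
    (hproper : ∀ i, 0 < p i)
    (P : Fin n → Fin n → ℝ)
    (hP : ∀ i j, P i j = (μ {ω | i ∈ S ω ∧ j ∈ S ω}).toReal)
    (v : Fin n → ℝ)
    (hsamp : ∀ u : Fin n → ℝ,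
      ∑ i, ∑ j, (P i j - p i * p j) * u i * u j ≤ ∑ i, p i * v i * u i ^ 2) :
    ∫ ω, ‖(∑ i ∈ S ω, (1 / ((n : ℝ) * p i)) • ξ i) - (1 / (n : ℝ)) • ∑ i, ξ i‖ ^ 2 ∂μ
      ≤ (1 / (n : ℝ) ^ 2) * ∑ i, (v i / p i) * ‖ξ i‖ ^ 2 := by
  set E : Fin n → Set Ω := fun i => {ω | i ∈ S ω}
  set a : Fin n → EuclideanSpace ℝ (Fin d) := fun i => (1 / ((n : ℝ) * p i)) • ξ i
  have hE : ∀ i, MeasurableSet (E i) := fun i =>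
    measurableSet_setOf_of_measurableSet_eq hSmeas (i ∈ ·)
  have hpE : ∀ i, μ.real (E i) = p i := fun i => (hp i).symm
  have hPE : ∀ i j, μ.real (E i ∩ E j) = P i j := fun i j => (hP i j).symm
  have hmean : ∀ i, p i • a i = (1 / (n : ℝ)) • ξ i := fun i => by
    simp only [a, smul_smul]
    congr 1
    field_simp [(hproper i).ne']
  have hdev : ∀ ω, ∑ i ∈ S ω, a i - (1 / (n : ℝ)) • ∑ i, ξ i
      = ∑ i, ((E i).indicator 1 ω - μ.real (E i)) • a i := fun ω => by
    simp_rw [sub_smul, sum_sub_distrib, hpE, hmean, ← smul_sum]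
    congr 1
    simp [E, Set.indicator, ite_smul]
  calc _ = ∑ i, ∑ j, (P i j - p i * p j) * inner ℝ (a i) (a j) := by
        simp_rw [hdev, integral_norm_sum_indicator_sub_smul_sq hE, hPE, hpE]
    _ ≤ ∑ i, p i * v i * ‖a i‖ ^ 2 := sum_mul_inner_le_of_forall_real _ _ hsamp a
    _ = _ := by
        rw [mul_sum]
        refine sum_congr rfl fun i _ => ?_
        simp only [a, norm_smul, mul_pow, Real.norm_eq_abs, sq_abs]
        field_simp

/-- Lemma D.1, variance bound. Let `ξ₁,…,ξₙ ∈ ℝ^d`, let `S` be a proper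
random subset of `{1,…,n}` with inclusion probabilities `pᵢ = Prob(i ∈ S) > 0` and pairwise
probabilities `Pᵢⱼ = Prob({i,j} ⊆ S)`, and suppose `v ∈ ℝⁿ` satisfies the sampling condition
`P − ppᵀ ⪯ Diag(p∘v)`, i.e. `∑ᵢⱼ (Pᵢⱼ − pᵢpⱼ) uᵢ uⱼ ≤ ∑ᵢ pᵢ vᵢ uᵢ²` for all `u`. Then
`E[‖∑_{i∈S} ξᵢ/(n pᵢ) − ξ̄‖²] ≤ (1/n²)∑ᵢ (vᵢ/pᵢ)‖ξᵢ‖²`. -/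
theorem arbitrary_sampling_variance_bound {Ω : Type*} [m0 : MeasurableSpace Ω]
    (μ : Measure Ω) [IsProbabilityMeasure μ]
    {d n : ℕ} (hn : 0 < n) (ξ : Fin n → EuclideanSpace ℝ (Fin d))
    (S : Ω → Finset (Fin n))
    (hSmeas : ∀ A : Finset (Fin n), MeasurableSet {ω | S ω = A})
    (p : Fin n → ℝ) (hp : ∀ i, p i = (μ {ω | i ∈ S ω}).toReal)
    (hproper : ∀ i, 0 < p i)
    (P : Fin n → Fin n → ℝ)
    (hP : ∀ i j, P i j = (μ {ω | i ∈ S ω ∧ j ∈ S ω}).toReal)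
    (v : Fin n → ℝ)
    (hsamp : ∀ u : Fin n → ℝ,
      ∑ i, ∑ j, (P i j - p i * p j) * u i * u j ≤ ∑ i, p i * v i * u i ^ 2) :
    ∫ ω, ‖(∑ i ∈ S ω, (1 / ((n : ℝ) * p i)) • ξ i) - (1 / (n : ℝ)) • ∑ i, ξ i‖ ^ 2 ∂μ
      ≤ (1 / (n : ℝ) ^ 2) * ∑ i, (v i / p i) * ‖ξ i‖ ^ 2 :=
  arbitrary_sampling_variance_bound_general (m0 := m0) μ ξ S hSmeas p hp hproper P hP v hsamp
end

section
/- (Uniform sampling admits v_i = (n−b)/(n−1)) Let n ≥ 2 and 1 ≤ b ≤ n, and let P be the n×n matrix with diagonal entries P_{ii} = b/n and off-diagonal entries P_{ij} = b(b−1)/(n(n−1)) (the probability matrix of a uniformly random size-b subset of {1,…,n}), and let p = (b/n, …, b/n). Then P − ppᵀ ⪯ Diag(p∘v) with v_i = (n−b)/(n−1) for all i; explicitly, for every u ∈ ℝ^n, ∑_{i,j}(P_{ij} − p_i p_j) u_i u_j ≤ (b(n−b)/(n(n−1)))·∑_{i=1}^n u_i². -/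
open Finset

/-!
Write `P - ppᵀ = α I + β (J - I)` with `α = b/n - (b/n)²` and `β = b(b-1)/(n(n-1)) - (b/n)²`.
Its quadratic form is `(α - β) ∑ uᵢ² + β (∑ uᵢ)²`, where `α - β = b(n-b)/(n(n-1))` and
`β = -b(n-b)/(n²(n-1)) ≤ 0`, so the second term can only decrease the form.
-/

section QuadraticForm

variable {ι R : Type*} [Fintype ι] [DecidableEq ι]

theorem sum_sum_ite_eq_mul_mul [CommRing R] (α β : R) (u : ι → R) :
    ∑ i, ∑ j, (if i = j then α else β) * u i * u j
      = (α - β) * ∑ i, u i ^ 2 + β * (∑ i, u i) ^ 2 := by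
  have hsplit : ∀ i j, (if i = j then α else β) * u i * u j
      = (if i = j then (α - β) * u i ^ 2 else 0) + β * (u i * u j) := by
    intro i j
    split_ifs with h
    · subst h; ring
    · ring
  simp only [hsplit, sum_add_distrib, sum_ite_eq, mem_univ, if_true, ← mul_sum, sq,
    sum_mul_sum]

theorem sum_sum_ite_mul_mul_le [CommRing R] [LinearOrder R] [IsStrictOrderedRing R]
    {α β : R} (hβ : β ≤ 0) (u : ι → R) :
    ∑ i, ∑ j, (if i = j then α else β) * u i * u j ≤ (α - β) * ∑ i, u i ^ 2 := by
  rw [sum_sum_ite_eq_mul_mul]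
  nlinarith [mul_nonpos_of_nonpos_of_nonneg hβ (sq_nonneg (∑ i, u i))]

end QuadraticForm

section UniformSampling

variable {n b : ℝ}

theorem uniform_pair_prob_sub_sq_eq (hn : 2 ≤ n) :
    b * (b - 1) / (n * (n - 1)) - (b / n) ^ 2 = -(b * (n - b) / (n ^ 2 * (n - 1))) := by
  have : n - 1 ≠ 0 := by linarith
  have : n ≠ 0 := by linarith
  field_simp
  ring

theorem uniform_pair_prob_sub_sq_nonpos (hn : 2 ≤ n) (hb : 0 ≤ b) (hbn : b ≤ n) :
    b * (b - 1) / (n * (n - 1)) - (b / n) ^ 2 ≤ 0 := by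
  rw [uniform_pair_prob_sub_sq_eq hn, neg_nonpos]
  apply div_nonneg
  · exact mul_nonneg hb (by linarith)
  · exact mul_nonneg (sq_nonneg n) (by linarith)

theorem uniform_prob_sub_pair_prob (hn : 2 ≤ n) :
    b / n - (b / n) ^ 2 - (b * (b - 1) / (n * (n - 1)) - (b / n) ^ 2)
      = b * (n - b) / (n * (n - 1)) := by
  have : n - 1 ≠ 0 := by linarith
  have : n ≠ 0 := by linarith
  field_simp
  ring

end UniformSampling

theorem uniform_sampling_condition_general (n b : ℕ) (hn : 2 ≤ n) (hbn : b ≤ n)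
    (P : Fin n → Fin n → ℝ)
    (hP : ∀ i j : Fin n, P i j =
      if i = j then (b : ℝ) / n else (b : ℝ) * ((b : ℝ) - 1) / ((n : ℝ) * ((n : ℝ) - 1)))
    (p : Fin n → ℝ) (hp : ∀ i, p i = (b : ℝ) / n)
    (u : Fin n → ℝ) :
    ∑ i, ∑ j, (P i j - p i * p j) * u i * u j
      ≤ ((b : ℝ) * ((n : ℝ) - (b : ℝ)) / ((n : ℝ) * ((n : ℝ) - 1))) * ∑ i, u i ^ 2 := by
  have hn' : (2 : ℝ) ≤ n := by exact_mod_cast hn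
  have hbn' : (b : ℝ) ≤ n := by exact_mod_cast hbn
  have hentry : ∀ i j, P i j - p i * p j
      = if i = j then (b : ℝ) / n - ((b : ℝ) / n) ^ 2
        else (b : ℝ) * ((b : ℝ) - 1) / ((n : ℝ) * ((n : ℝ) - 1)) - ((b : ℝ) / n) ^ 2 := by
    intro i j
    rw [hP, hp, hp, ← sq]
    split_ifs <;> rfl
  simp only [hentry]
  rw [← uniform_prob_sub_pair_prob hn']
  exact sum_sum_ite_mul_mul_le (uniform_pair_prob_sub_sq_nonpos hn' b.cast_nonneg hbn') u

/-- uniform sampling admits `vᵢ = (n−b)/(n−1)`. For the probability matrix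
of a uniformly random size-`b` subset of `{1,…,n}` (`Pᵢᵢ = b/n`, `Pᵢⱼ = b(b−1)/(n(n−1))` for
`i ≠ j`) and `p = (b/n,…,b/n)`, one has `P − ppᵀ ⪯ Diag(p∘v)` with `vᵢ = (n−b)/(n−1)`:
explicitly, `∑ᵢⱼ (Pᵢⱼ − pᵢpⱼ) uᵢ uⱼ ≤ (b(n−b)/(n(n−1))) ∑ᵢ uᵢ²` for every `u ∈ ℝⁿ`. -/
theorem uniform_sampling_condition (n b : ℕ) (hn : 2 ≤ n) (hb1 : 1 ≤ b) (hbn : b ≤ n)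
    (P : Fin n → Fin n → ℝ)
    (hP : ∀ i j : Fin n, P i j =
      if i = j then (b : ℝ) / n else (b : ℝ) * ((b : ℝ) - 1) / ((n : ℝ) * ((n : ℝ) - 1)))
    (p : Fin n → ℝ) (hp : ∀ i, p i = (b : ℝ) / n)
    (u : Fin n → ℝ) :
    ∑ i, ∑ j, (P i j - p i * p j) * u i * u j
      ≤ ((b : ℝ) * ((n : ℝ) - (b : ℝ)) / ((n : ℝ) * ((n : ℝ) - 1))) * ∑ i, u i ^ 2 :=
  uniform_sampling_condition_general n b hn hbn P hP p hp u
end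

section
/- (Optimal independent-sampling probabilities, similar-G case) Let G_1, …, G_n > 0, let b be a real number with 1 ≤ b ≤ n, and assume b·max_i G_i ≤ ∑_{j=1}^n G_j. Define p_i = b·G_i/∑_{j=1}^n G_j. Then p ∈ (0,1]^n with ∑_{i=1}^n p_i = b, and p minimizes the objective (1/n²)∑_{i=1}^n G_i²/q_i over all q ∈ (0,1]^n with ∑_{i=1}^n q_i = b; that is, for every such q, (1/n²)∑_{i=1}^n G_i²/p_i = (1/(n²b))·(∑_{i=1}^n G_i)² ≤ (1/n²)∑_{i=1}^n G_i²/q_i. -/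
/-!
By the Cauchy–Schwarz inequality in Sedrakyan's form, `(∑ Gᵢ)² / ∑ qᵢ ≤ ∑ Gᵢ² / qᵢ` for every
positive `q`, so on the constraint set `∑ qᵢ = b` the objective is at least `(∑ Gᵢ)² / (n² b)`.
Probabilities proportional to `G` attain this bound, and the condition `b · maxᵢ Gᵢ ≤ ∑ⱼ Gⱼ`
is exactly what keeps them at most `1`.
-/

open Finset

section ProportionalWeights

variable {ι : Type*} (s : Finset ι) (G : ι → ℝ) {b : ℝ}

theorem sum_mul_div_sum_self (hS : ∑ j ∈ s, G j ≠ 0) :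
    ∑ i ∈ s, b * G i / ∑ j ∈ s, G j = b := by
  rw [← sum_div, ← mul_sum, mul_div_cancel_right₀ b hS]

theorem sum_sq_div_mul_div_sum_self (hG : ∀ i ∈ s, G i ≠ 0) (hb : b ≠ 0) :
    ∑ i ∈ s, G i ^ 2 / (b * G i / ∑ j ∈ s, G j) = (∑ i ∈ s, G i) ^ 2 / b := by
  calc ∑ i ∈ s, G i ^ 2 / (b * G i / ∑ j ∈ s, G j)
      = ∑ i ∈ s, G i * ((∑ j ∈ s, G j) / b) :=
        sum_congr rfl fun i hi => by field_simp [hG i hi]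
    _ = (∑ i ∈ s, G i) ^ 2 / b := by rw [← sum_mul]; ring

end ProportionalWeights

theorem optimal_independent_sampling_general {n : ℕ} (hn : 0 < n)
    (G : Fin n → ℝ) (hG : ∀ i, 0 < G i)
    (b : ℝ) (hb1 : 1 ≤ b)
    (hsim : ∀ i, b * G i ≤ ∑ j, G j)
    (p : Fin n → ℝ) (hp : ∀ i, p i = b * G i / ∑ j, G j) :
    (∀ i, p i ∈ Set.Ioc (0 : ℝ) 1) ∧
    (∑ i, p i = b) ∧
    ((1 / (n : ℝ) ^ 2) * ∑ i, G i ^ 2 / p i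
        = (1 / ((n : ℝ) ^ 2 * b)) * (∑ i, G i) ^ 2) ∧
    (∀ q : Fin n → ℝ, (∀ i, q i ∈ Set.Ioc (0 : ℝ) 1) → (∑ i, q i = b) →
      (1 / (n : ℝ) ^ 2) * ∑ i, G i ^ 2 / p i
        ≤ (1 / (n : ℝ) ^ 2) * ∑ i, G i ^ 2 / q i) := by
  obtain rfl : p = fun i => b * G i / ∑ j, G j := funext hp
  have hb : 0 < b := one_pos.trans_le hb1
  have hS : 0 < ∑ j, G j := sum_pos (fun i _ => hG i) (univ_nonempty_iff.2 ⟨⟨0, hn⟩⟩)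
  have hval : ∑ i, G i ^ 2 / (b * G i / ∑ j, G j) = (∑ i, G i) ^ 2 / b :=
    sum_sq_div_mul_div_sum_self _ G (fun i _ => (hG i).ne') hb.ne'
  refine ⟨fun i => ⟨div_pos (mul_pos hb (hG i)) hS, (div_le_one hS).2 (hsim i)⟩,
    sum_mul_div_sum_self _ G hS.ne', by rw [hval]; field_simp, fun q hq hqsum => ?_⟩
  rw [hval, ← hqsum]
  exact mul_le_mul_of_nonneg_left (sq_sum_div_le_sum_sq_div _ _ fun i _ => (hq i).1)
    (by positivity)

/-- optimal independent-sampling probabilities, similar-`G` case.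
Let `G₁,…,Gₙ > 0`, `1 ≤ b ≤ n` real, with `b·maxᵢ Gᵢ ≤ ∑ⱼ Gⱼ`, and `pᵢ = b·Gᵢ/∑ⱼ Gⱼ`.
Then `p ∈ (0,1]ⁿ`, `∑ᵢ pᵢ = b`, the objective value at `p` is
`(1/n²)∑ᵢ Gᵢ²/pᵢ = (1/(n²b))(∑ᵢ Gᵢ)²`, and `p` minimizes `(1/n²)∑ᵢ Gᵢ²/qᵢ` over all
`q ∈ (0,1]ⁿ` with `∑ᵢ qᵢ = b`. -/
theorem optimal_independent_sampling {n : ℕ} (hn : 0 < n)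
    (G : Fin n → ℝ) (hG : ∀ i, 0 < G i)
    (b : ℝ) (hb1 : 1 ≤ b) (hbn : b ≤ n)
    (hsim : ∀ i, b * G i ≤ ∑ j, G j)
    (p : Fin n → ℝ) (hp : ∀ i, p i = b * G i / ∑ j, G j) :
    (∀ i, p i ∈ Set.Ioc (0 : ℝ) 1) ∧
    (∑ i, p i = b) ∧
    ((1 / (n : ℝ) ^ 2) * ∑ i, G i ^ 2 / p i
        = (1 / ((n : ℝ) ^ 2 * b)) * (∑ i, G i) ^ 2) ∧
    (∀ q : Fin n → ℝ, (∀ i, q i ∈ Set.Ioc (0 : ℝ) 1) → (∑ i, q i = b) →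
      (1 / (n : ℝ) ^ 2) * ∑ i, G i ^ 2 / p i
        ≤ (1 / (n : ℝ) ^ 2) * ∑ i, G i ^ 2 / q i) :=
  optimal_independent_sampling_general hn G hG b hb1 hsim p hp
end
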